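/- arXiv:1504.06079 — 8 statements merged into one kernel-verified Lean document; each statement's English description precedes it below -/
import Mathlib

section
/- Let ξ be a feasible design whose treatment proportions design w = w_ξ satisfies w_u > 0 for all u, and assume the contrast matrix Q has full column rank s. Then for every generalized inverse G of M(ξ), the matrix Kᵀ G K is symmetric positive definite and Qᵀ diag(w)⁻¹ Q ⪯ Kᵀ G K; equivalently, the information matrix N_K(ξ) = (Kᵀ G K)⁻¹ satisfies N_K(ξ) ⪯ N_Q(w). In words: introducing nuisance effects cannot increase the information about the treatment contrasts. -/
/-! Feasibility gives `L` with `M(ξ) L = K`, and then `Kᵀ G K = Lᵀ M(ξ) L` for every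
generalized inverse `G`. Since the treatment block of `M(ξ)` is `diag(w)`, the comparison
matrix `P = ((diag(w)⁻¹ Q)ᵀ, 0)ᵀ` satisfies `Pᵀ M(ξ) P = Pᵀ K = Qᵀ diag(w)⁻¹ Q`, so expanding
`(L - P)ᵀ M(ξ) (L - P) ⪰ 0` gives `Lᵀ M(ξ) L ⪰ Qᵀ diag(w)⁻¹ Q`, and the right side is
positive definite because `Q` has full column rank. Inversion is antitone on positive
definite matrices, which turns this into `N_K(ξ) ⪯ N_Q(w)`. -/

open Matrix Finset

noncomputable section

/-- An approximate design on `v` treatments and `n` nuisance conditions: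
nonnegative weights summing to one. -/
def IsDesign {v n : ℕ} (ξ : Fin v → Fin n → ℝ) : Prop :=
  (∀ u t, 0 ≤ ξ u t) ∧ ∑ u, ∑ t, ξ u t = 1

/-- The treatment proportions design of `ξ`: `(w_ξ)_u = ∑_t ξ(u,t)`. -/
def tpd {v n : ℕ} (ξ : Fin v → Fin n → ℝ) : Fin v → ℝ :=
  fun u => ∑ t, ξ u t

/-- The regression vector `f(u,t) = (e_uᵀ, h(t)ᵀ)ᵀ`. -/
def regvec {v n : ℕ} {ι : Type*} (h : Fin n → ι → ℝ) (u : Fin v) (t : Fin n) :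
    Fin v ⊕ ι → ℝ :=
  Sum.elim (fun i => if i = u then 1 else 0) (h t)

/-- The moment matrix `M(ξ) = ∑_{u,t} ξ(u,t) f(u,t) f(u,t)ᵀ`. -/
def momM {v n : ℕ} {ι : Type*} [Fintype ι] (h : Fin n → ι → ℝ)
    (ξ : Fin v → Fin n → ℝ) : Matrix (Fin v ⊕ ι) (Fin v ⊕ ι) ℝ :=
  ∑ u, ∑ t, ξ u t • vecMulVec (regvec h u t) (regvec h u t)

/-- The matrix `K = (Qᵀ, 0)ᵀ`. -/
def Kmat {v s : ℕ} (ι : Type*) (Q : Matrix (Fin v) (Fin s) ℝ) :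
    Matrix (Fin v ⊕ ι) (Fin s) ℝ :=
  Matrix.of fun i j => Sum.elim (fun a => Q a j) (fun _ => 0) i

/-- Feasibility of a design: the column space of `K` is contained in the
column space of `M(ξ)`. -/
def Feasible {v n s : ℕ} {ι : Type*} [Fintype ι] (h : Fin n → ι → ℝ)
    (Q : Matrix (Fin v) (Fin s) ℝ) (ξ : Fin v → Fin n → ℝ) : Prop :=
  LinearMap.range (Kmat ι Q).mulVecLin ≤ LinearMap.range (momM h ξ).mulVecLin

/-- `G` is a generalized inverse of `M`. -/
def IsGInv {ι : Type*} [Fintype ι] (M G : Matrix ι ι ℝ) : Prop :=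
  M * G * M = M

/-- Information matrix `N_Q(w) = (Qᵀ diag(w)⁻¹ Q)⁻¹` of a treatment
proportions design in the marginal model. -/
def NQ {v s : ℕ} (Q : Matrix (Fin v) (Fin s) ℝ) (w : Fin v → ℝ) :
    Matrix (Fin s) (Fin s) ℝ :=
  (Qᵀ * diagonal (fun u => (w u)⁻¹) * Q)⁻¹

/-- The matrix `H_ξ` whose `u`-th column is `(1/w_u) ∑_t ξ(u,t) h(t)`. -/
def Hmat {v n : ℕ} {ι : Type*} (h : Fin n → ι → ℝ) (ξ : Fin v → Fin n → ℝ) :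
    Matrix ι (Fin v) ℝ :=
  Matrix.of fun i u => (tpd ξ u)⁻¹ * ∑ t, ξ u t * h t i

/-- `ξ` is resistant to nuisance effects for the contrasts `Q`. -/
def NuisanceResistant {v n s : ℕ} {ι : Type*} (h : Fin n → ι → ℝ)
    (Q : Matrix (Fin v) (Fin s) ℝ) (ξ : Fin v → Fin n → ℝ) : Prop :=
  Hmat h ξ * Q = 0

/-- `ξ` is balanced: all columns of `H_ξ` coincide. -/
def BalancedDesign {v n : ℕ} {ι : Type*} (h : Fin n → ι → ℝ)
    (ξ : Fin v → Fin n → ℝ) : Prop :=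
  ∀ u u' : Fin v, (fun i => Hmat h ξ i u) = (fun i => Hmat h ξ i u')


namespace Matrix

variable {n k : Type*} [Fintype n]

theorem exists_mul_eq_of_range_mulVecLin_le {m R : Type*} [CommSemiring R] [Fintype k]
    {M : Matrix m n R} {K : Matrix m k R}
    (h : LinearMap.range K.mulVecLin ≤ LinearMap.range M.mulVecLin) :
    ∃ L : Matrix n k R, M * L = K := by
  classical
  choose L hL using fun j => h ⟨Pi.single j 1, mulVec_single_one K j⟩
  refine ⟨(of L)ᵀ, ext fun i j => ?_⟩
  simpa [mul_apply, mulVec, dotProduct, mul_comm] using congrFun (hL j) i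

theorem conjTranspose_mul_mul_eq_of_mul_mul_self {R : Type*} [Semiring R] [StarRing R]
    {M G : Matrix n n R} {L K : Matrix n k R}
    (hM : M.IsHermitian) (hG : M * G * M = M) (hL : M * L = K) :
    Kᴴ * G * K = Lᴴ * M * L := by
  rw [← hL, conjTranspose_mul, hM.eq]
  calc Lᴴ * M * G * (M * L) = Lᴴ * (M * G * M) * L := by simp only [Matrix.mul_assoc]
    _ = Lᴴ * M * L := by rw [hG]

theorem posSemidef_sub_of_mul_eq {R : Type*} [Ring R] [PartialOrder R] [StarRing R] [Fintype k]
    {M : Matrix n n R} {L K P : Matrix n k R}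
    (hM : M.PosSemidef) (hL : M * L = K) (hP : Pᴴ * M * P = Pᴴ * K) :
    (Lᴴ * M * L - Pᴴ * K).PosSemidef := by
  have hLM : Lᴴ * M = Kᴴ := by rw [← hL, conjTranspose_mul, hM.isHermitian.eq]
  have hKP : Kᴴ * P = Pᴴ * K := by
    rw [← hP]
    simpa [conjTranspose_mul, hM.isHermitian.eq, Matrix.mul_assoc] using
      congrArg conjTranspose hP.symm
  have hexpand : (L - P)ᴴ * M * (L - P) = Lᴴ * M * L - Pᴴ * K := by
    rw [conjTranspose_sub, Matrix.sub_mul, Matrix.sub_mul, Matrix.mul_sub, Matrix.mul_sub, hP,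
      hLM, hKP, Matrix.mul_assoc, hL]
    abel
  exact hexpand ▸ hM.conjTranspose_mul_mul_same (L - P)

theorem PosSemidef.inv_sub_inv {K : Type*} [Field K] [PartialOrder K] [StarRing K]
    [StarOrderedRing K] [DecidableEq n] {A B : Matrix n n K} (hBA : (B - A).PosSemidef)
    (hA : A.PosDef) (hB : B.PosDef) : (A⁻¹ - B⁻¹).PosSemidef := by
  let _ := hB.isUnit.invertible
  -- `[B 1; 1 A⁻¹]` has Schur complements `B - A` and `A⁻¹ - B⁻¹`.
  let _ := hA.inv.isUnit.invertible
  have hblock : (fromBlocks B 1 1ᴴ A⁻¹).PosSemidef :=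
    (PosDef.fromBlocks₂₂ B 1 hA.inv).2 <| by
      rwa [nonsing_inv_nonsing_inv A (hA.isUnit.map detMonoidHom), conjTranspose_one,
        Matrix.one_mul, Matrix.mul_one]
  simpa using (PosDef.fromBlocks₁₁ 1 A⁻¹ hB).1 hblock

theorem mulVec_injective_of_rank_eq {m K : Type*} [Field K] {A : Matrix m n K}
    (h : A.rank = Fintype.card n) : Function.Injective A.mulVec := by
  have hdim := LinearMap.finrank_range_add_finrank_ker A.mulVecLin
  have hrange : Module.finrank K (LinearMap.range A.mulVecLin) = Fintype.card n := h
  rw [hrange, Module.finrank_fintype_fun_eq_card] at hdim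
  exact LinearMap.ker_eq_bot.mp <| Submodule.finrank_eq_zero.mp
    (show Module.finrank K (LinearMap.ker A.mulVecLin) = 0 by omega)

end Matrix

section Design

variable {v n s : ℕ} {ι : Type*}

theorem Kmat_eq_fromRows (Q : Matrix (Fin v) (Fin s) ℝ) : Kmat ι Q = fromRows Q 0 := by
  ext (i | i) j <;> rfl

theorem toBlocks₁₁_momM [Fintype ι] (h : Fin n → ι → ℝ) (ξ : Fin v → Fin n → ℝ) :
    (momM h ξ).toBlocks₁₁ = diagonal (tpd ξ) := by
  ext u u'
  rcases eq_or_ne u u' with rfl | huu <;>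
    simp [toBlocks₁₁, momM, Matrix.sum_apply, vecMulVec_apply, regvec, tpd, *]

theorem momM_posSemidef [Fintype ι] (h : Fin n → ι → ℝ) {ξ : Fin v → Fin n → ℝ}
    (hξ : ∀ u t, 0 ≤ ξ u t) :
    (momM h ξ).PosSemidef :=
  posSemidef_sum _ fun u _ => posSemidef_sum _ fun t _ => by
    simpa using (posSemidef_vecMulVec_self_star (regvec h u t)).smul (hξ u t)

theorem Kmat_transpose_mul_momM_mul_Kmat [Fintype ι] (h : Fin n → ι → ℝ)
    (ξ : Fin v → Fin n → ℝ) (A B : Matrix (Fin v) (Fin s) ℝ) :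
    (Kmat ι A)ᵀ * momM h ξ * Kmat ι B = Aᵀ * diagonal (tpd ξ) * B := by
  rw [Kmat_eq_fromRows, Kmat_eq_fromRows, transpose_fromRows, ← fromBlocks_toBlocks (momM h ξ),
    fromCols_mul_fromBlocks, fromCols_mul_fromRows, toBlocks₁₁_momM]
  simp

theorem Kmat_transpose_mul_Kmat [Fintype ι] (A B : Matrix (Fin v) (Fin s) ℝ) :
    (Kmat ι A)ᵀ * Kmat ι B = Aᵀ * B := by
  rw [Kmat_eq_fromRows, Kmat_eq_fromRows, transpose_fromRows, fromCols_mul_fromRows]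
  simp

end Design

theorem stmt0_general {v n d s : ℕ}
    (h : Fin n → Fin d → ℝ) (Q : Matrix (Fin v) (Fin s) ℝ)
    (hQrank : Q.rank = s)
    (ξ : Fin v → Fin n → ℝ) (hξ : IsDesign ξ)
    (hfeas : Feasible h Q ξ)
    (hw : ∀ u, 0 < tpd ξ u)
    (G : Matrix (Fin v ⊕ Fin d) (Fin v ⊕ Fin d) ℝ)
    (hG : IsGInv (momM h ξ) G) :
    ((Kmat (Fin d) Q)ᵀ * G * Kmat (Fin d) Q).PosDef ∧
    (((Kmat (Fin d) Q)ᵀ * G * Kmat (Fin d) Q)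
        - Qᵀ * diagonal (fun u => (tpd ξ u)⁻¹) * Q).PosSemidef ∧
    (NQ Q (tpd ξ) - ((Kmat (Fin d) Q)ᵀ * G * Kmat (Fin d) Q)⁻¹).PosSemidef := by
  set K := Kmat (Fin d) Q
  set D := diagonal fun u => (tpd ξ u)⁻¹
  set P := Kmat (Fin d) (D * Q)
  have hM := momM_posSemidef h hξ.1
  obtain ⟨L, hL⟩ := exists_mul_eq_of_range_mulVecLin_le hfeas
  have hKGK : Kᵀ * G * K = Lᵀ * momM h ξ * L := by
    simpa using conjTranspose_mul_mul_eq_of_mul_mul_self hM.isHermitian hG hL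
  have hPK : Pᵀ * K = Qᵀ * D * Q := by
    rw [Kmat_transpose_mul_Kmat, transpose_mul, diagonal_transpose, Matrix.mul_assoc]
  have hDwD : D * diagonal (tpd ξ) * D = D := by
    simp only [D, diagonal_mul_diagonal]
    congr 1
    funext u
    field_simp [(hw u).ne']
  have hPMP : Pᵀ * momM h ξ * P = Qᵀ * D * Q := by
    rw [Kmat_transpose_mul_momM_mul_Kmat, transpose_mul, diagonal_transpose]
    calc Qᵀ * D * diagonal (tpd ξ) * (D * Q) = Qᵀ * (D * diagonal (tpd ξ) * D) * Q := by
          simp only [Matrix.mul_assoc]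
      _ = Qᵀ * D * Q := by rw [hDwD]
  have hC : (Qᵀ * D * Q).PosDef := by
    simpa using (posDef_diagonal_iff.2 fun u => inv_pos.2 (hw u)).conjTranspose_mul_mul_same
      (mulVec_injective_of_rank_eq (by simpa using hQrank))
  have hle : (Kᵀ * G * K - Qᵀ * D * Q).PosSemidef := by
    rw [hKGK, ← hPK]
    simpa using posSemidef_sub_of_mul_eq hM hL (P := P) (by simpa using hPMP.trans hPK.symm)
  have hpd : (Kᵀ * G * K).PosDef := by simpa using hC.add_posSemidef hle
  exact ⟨hpd, hle, hle.inv_sub_inv hC hpd⟩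

/-- Introducing nuisance effects cannot increase the information
about the treatment contrasts: for a feasible design ξ with positive treatment
proportions w and full-column-rank contrast matrix Q, for every generalized
inverse G of M(ξ), the matrix KᵀGK is symmetric positive definite,
Qᵀ diag(w)⁻¹ Q ⪯ KᵀGK, and equivalently N_K(ξ) = (KᵀGK)⁻¹ ⪯ N_Q(w). -/
theorem stmt0 {v n d s : ℕ} (hv : 2 ≤ v)
    (h : Fin n → Fin d → ℝ) (Q : Matrix (Fin v) (Fin s) ℝ)
    (hQc : ∀ j, ∑ i, Q i j = 0) (hQrow : ∀ i, ∃ j, Q i j ≠ 0)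
    (hQrank : Q.rank = s)
    (ξ : Fin v → Fin n → ℝ) (hξ : IsDesign ξ)
    (hfeas : Feasible h Q ξ)
    (hw : ∀ u, 0 < tpd ξ u)
    (G : Matrix (Fin v ⊕ Fin d) (Fin v ⊕ Fin d) ℝ)
    (hG : IsGInv (momM h ξ) G) :
    ((Kmat (Fin d) Q)ᵀ * G * Kmat (Fin d) Q).PosDef ∧
    (((Kmat (Fin d) Q)ᵀ * G * Kmat (Fin d) Q)
        - Qᵀ * diagonal (fun u => (tpd ξ u)⁻¹) * Q).PosSemidef ∧
    (NQ Q (tpd ξ) - ((Kmat (Fin d) Q)ᵀ * G * Kmat (Fin d) Q)⁻¹).PosSemidef :=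
  stmt0_general h Q hQrank ξ hξ hfeas hw G hG

end
end

section
/- Let ξ be a design that is nuisance resistant for Q and whose treatment proportions design w = w_ξ satisfies w_u > 0 for all u. Then (i) ξ is feasible; (ii) Kᵀ G K = Qᵀ diag(w)⁻¹ Q for every generalized inverse G of M(ξ); and consequently (iii) if Q has full column rank s, ξ has the same information matrix as w, namely (Kᵀ G K)⁻¹ = N_Q(w). -/
open Matrix Finset

noncomputable section

/-!
Put `L = (diag(w)⁻¹ Q ; 0)`. The upper-left block of `M(ξ)` is `diag(w)` and its lower-left block
is `H_ξ diag(w)`, so `M(ξ) L = (Q ; H_ξ Q) = K` by nuisance resistance. Hence `K` factors through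
`M(ξ)`, which is feasibility, and for a generalized inverse `G` of the symmetric matrix `M(ξ)`,
`Kᵀ G K = Lᵀ M G M L = Lᵀ M L = Lᵀ K = Qᵀ diag(w)⁻¹ Q`.
-/

section GeneralizedInverse

variable {R : Type*} [CommRing R] {m k : Type*}

theorem Matrix.range_mulVecLin_le_of_mul_eq {l : Type*} [Fintype l] [Fintype k]
    {M : Matrix m l R} {L : Matrix l k R} {K : Matrix m k R} (hK : M * L = K) :
    LinearMap.range K.mulVecLin ≤ LinearMap.range M.mulVecLin := by
  rw [← hK, mulVecLin_mul]
  exact LinearMap.range_comp_le_range _ _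

theorem Matrix.transpose_mul_mul_eq_of_mul_eq [Fintype m] {M G : Matrix m m R}
    {L K : Matrix m k R}
    (hM : Mᵀ = M) (hG : M * G * M = M) (hK : M * L = K) :
    Kᵀ * G * K = Lᵀ * K := by
  calc Kᵀ * G * K = Lᵀ * (M * G * M) * L := by
        rw [← hK, transpose_mul, hM]; simp only [Matrix.mul_assoc]
    _ = Lᵀ * K := by rw [hG, Matrix.mul_assoc, hK]

end GeneralizedInverse

def Lmat {v n s : ℕ} (ι : Type*) (ξ : Fin v → Fin n → ℝ) (Q : Matrix (Fin v) (Fin s) ℝ) :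
    Matrix (Fin v ⊕ ι) (Fin s) ℝ :=
  Matrix.of fun i j => Sum.elim (fun a => (tpd ξ a)⁻¹ * Q a j) (fun _ => 0) i

section Design

variable {v n s : ℕ} {ι : Type*} [Fintype ι] (h : Fin n → ι → ℝ) (ξ : Fin v → Fin n → ℝ)

theorem momM_transpose : (momM h ξ)ᵀ = momM h ξ := by
  simp only [momM, transpose_sum, transpose_smul, transpose_vecMulVec]

theorem momM_apply_inl (i : Fin v ⊕ ι) (a : Fin v) :
    momM h ξ i (Sum.inl a) = ∑ t, ξ a t * regvec h a t i := by
  simp only [momM, Matrix.sum_apply, Matrix.smul_apply, vecMulVec_apply, smul_eq_mul, regvec,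
    Sum.elim_inl, mul_ite, mul_one, mul_zero]
  rw [Finset.sum_comm]
  simp only [Finset.sum_ite_eq, Finset.mem_univ, if_true]

theorem momM_apply_inl_inl (b a : Fin v) :
    momM h ξ (Sum.inl b) (Sum.inl a) = diagonal (tpd ξ) b a := by
  rw [momM_apply_inl, diagonal_apply]
  split_ifs with hba <;> simp [regvec, hba, tpd]

theorem momM_apply_inr_inl {a : Fin v} (ha : tpd ξ a ≠ 0) (c : ι) :
    momM h ξ (Sum.inr c) (Sum.inl a) = tpd ξ a * Hmat h ξ c a := by
  rw [momM_apply_inl, Hmat, of_apply, mul_inv_cancel_left₀ ha]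
  rfl

theorem momM_mul_Lmat {Q : Matrix (Fin v) (Fin s) ℝ} (hw : ∀ u, tpd ξ u ≠ 0)
    (hres : NuisanceResistant h Q ξ) :
    momM h ξ * Lmat ι ξ Q = Kmat ι Q := by
  ext i j
  simp only [Matrix.mul_apply, Fintype.sum_sum_type, Lmat, of_apply, Sum.elim_inl, Sum.elim_inr,
    mul_zero, Finset.sum_const_zero, add_zero]
  rcases i with b | c
  · simp_rw [momM_apply_inl_inl, diagonal_apply, ite_mul, zero_mul, Finset.sum_ite_eq]
    simp [Kmat, mul_inv_cancel_left₀ (hw b)]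
  · have hHQ : (Hmat h ξ * Q) c j = 0 := by rw [hres]; rfl
    rw [Matrix.mul_apply] at hHQ
    simp_rw [momM_apply_inr_inl h ξ (hw _), Kmat, of_apply, Sum.elim_inr, ← hHQ]
    exact Finset.sum_congr rfl fun a _ => by field_simp [hw a]

theorem Lmat_transpose_mul_Kmat (Q : Matrix (Fin v) (Fin s) ℝ) :
    (Lmat ι ξ Q)ᵀ * Kmat ι Q = Qᵀ * diagonal (fun u => (tpd ξ u)⁻¹) * Q := by
  ext j j'
  rw [Matrix.mul_apply, Matrix.mul_apply, Fintype.sum_sum_type]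
  simp only [mul_diagonal, Lmat, Kmat, transpose_apply, of_apply, Sum.elim_inl, Sum.elim_inr,
    mul_zero, Finset.sum_const_zero, add_zero]
  exact Finset.sum_congr rfl fun a _ => by ring

end Design

theorem stmt3_general {v n d s : ℕ}
    (h : Fin n → Fin d → ℝ) (Q : Matrix (Fin v) (Fin s) ℝ)
    (ξ : Fin v → Fin n → ℝ)
    (hw : ∀ u, 0 < tpd ξ u)
    (hres : NuisanceResistant h Q ξ) :
    Feasible h Q ξ ∧
    (∀ G, IsGInv (momM h ξ) G →
      (Kmat (Fin d) Q)ᵀ * G * Kmat (Fin d) Q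
        = Qᵀ * diagonal (fun u => (tpd ξ u)⁻¹) * Q) ∧
    (Q.rank = s → ∀ G, IsGInv (momM h ξ) G →
      ((Kmat (Fin d) Q)ᵀ * G * Kmat (Fin d) Q)⁻¹ = NQ Q (tpd ξ)) := by
  have hML := momM_mul_Lmat h ξ (fun u => (hw u).ne') hres
  have hKGK : ∀ G, IsGInv (momM h ξ) G →
      (Kmat (Fin d) Q)ᵀ * G * Kmat (Fin d) Q
        = Qᵀ * diagonal (fun u => (tpd ξ u)⁻¹) * Q := fun G hG => by
    rw [transpose_mul_mul_eq_of_mul_eq (momM_transpose h ξ) hG hML, Lmat_transpose_mul_Kmat]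
  refine ⟨range_mulVecLin_le_of_mul_eq hML, hKGK, fun _ G hG => ?_⟩
  rw [hKGK G hG, NQ]

/-- A nuisance resistant design ξ with positive treatment
proportions w = w_ξ is (i) feasible, (ii) satisfies KᵀGK = Qᵀ diag(w)⁻¹ Q for
every generalized inverse G of M(ξ), and (iii) if Q has full column rank s,
ξ has the same information matrix as w: (KᵀGK)⁻¹ = N_Q(w). -/
theorem stmt3 {v n d s : ℕ} (hv : 2 ≤ v)
    (h : Fin n → Fin d → ℝ) (Q : Matrix (Fin v) (Fin s) ℝ)
    (hQc : ∀ j, ∑ i, Q i j = 0) (hQrow : ∀ i, ∃ j, Q i j ≠ 0)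
    (ξ : Fin v → Fin n → ℝ) (hξ : IsDesign ξ)
    (hw : ∀ u, 0 < tpd ξ u)
    (hres : NuisanceResistant h Q ξ) :
    Feasible h Q ξ ∧
    (∀ G, IsGInv (momM h ξ) G →
      (Kmat (Fin d) Q)ᵀ * G * Kmat (Fin d) Q
        = Qᵀ * diagonal (fun u => (tpd ξ u)⁻¹) * Q) ∧
    (Q.rank = s → ∀ G, IsGInv (momM h ξ) G →
      ((Kmat (Fin d) Q)ᵀ * G * Kmat (Fin d) Q)⁻¹ = NQ Q (tpd ξ)) :=
  stmt3_general h Q ξ hw hres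

end
end

section
/- Let v ≥ 2 and let Q be a v × (v−1) real matrix with Qᵀ1_v = 0 and QQᵀ = a(I_v − J_v/v) for some a > 0 (a completely symmetric, full-column-rank system of contrasts). Let Φ : ℝ^{(v−1)×(v−1)} → ℝ be concave, Loewner-isotone on positive semidefinite matrices, and orthogonally invariant (Φ(U N Uᵀ) = Φ(N) for every orthogonal (v−1) × (v−1) matrix U). Then the uniform treatment proportions design w̄ = (1/v, …, 1/v)ᵀ is Φ-optimal in the marginal model: Φ((Qᵀ diag(w)⁻¹ Q)⁻¹) ≤ Φ((Qᵀ diag(w̄)⁻¹ Q)⁻¹) for every w ∈ ℝ^v with all w_u > 0 and Σ_u w_u = 1. -/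
/-!
Write `S = QᵀQ`. Complete symmetry forces `S = a·I`, and then the Gauss–Markov inequality gives
`(Qᵀ W⁻¹ Q)⁻¹ ⪯ a⁻² Qᵀ W Q =: B` for `W = diag w`, so `Φ(N_Q(w)) ≤ Φ(B)` by isotonicity.
Cyclically shifting the treatments permutes the rows of `Q`; since `QQᵀ` is invariant under this
permutation, each shifted `Q` equals `Q Uᵀ` for an orthogonal `U`, so averaging the shifted copies
of `B` does not change `Φ(B)` by invariance, while concavity bounds the average of the values by
the value at the average. The average of the shifts of `W` is `I/v`, which turns the averaged
matrix into `(v a)⁻¹ I = N_Q(w̄)`.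
-/

open Matrix Finset

noncomputable section

theorem Matrix.convex_setOf_posSemidef {m : Type*} :
    Convex ℝ {A : Matrix m m ℝ | A.PosSemidef} :=
  fun _ hA _ hB _ _ hα hβ _ => (hA.smul hα).add (hB.smul hβ)

theorem ConcaveOn.le_apply_smul_sum_conj {m T : Type*} [Fintype m] [DecidableEq m] [Fintype T]
    [Nonempty T] {Φ : Matrix m m ℝ → ℝ} (hΦ : ConcaveOn ℝ {A | A.PosSemidef} Φ)
    (hinv : ∀ U : Matrix m m ℝ, U * Uᵀ = 1 → ∀ N, Φ (U * N * Uᵀ) = Φ N)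
    {B : Matrix m m ℝ} (hB : B.PosSemidef) (U : T → Matrix m m ℝ) (hU : ∀ t, U t * (U t)ᵀ = 1) :
    Φ B ≤ Φ ((Fintype.card T : ℝ)⁻¹ • ∑ t, U t * B * (U t)ᵀ) := by
  have hT : (0 : ℝ) < Fintype.card T := by exact_mod_cast Fintype.card_pos
  have hconj : ∀ t ∈ univ, U t * B * (U t)ᵀ ∈ {A : Matrix m m ℝ | A.PosSemidef} := fun t _ => by
    simpa [conjTranspose_eq_transpose_of_trivial] using hB.mul_mul_conjTranspose_same (U t)
  have := hΦ.le_map_sum (fun _ _ => inv_nonneg.mpr hT.le) (by simp [hT.ne']) hconj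
  simpa [hinv _ (hU _), ← smul_sum, card_univ, hT.ne'] using this

section ScaledIsometry

variable {n m : Type*} [Fintype n] [Fintype m] [DecidableEq m] {Q : Matrix n m ℝ} {a : ℝ}

theorem Matrix.mulVec_injective_of_transpose_mul_self_eq_smul_one (ha : a ≠ 0)
    (hQ : Qᵀ * Q = a • 1) : Function.Injective Q.mulVec := fun x y hxy => by
  have := congrArg Qᵀ.mulVec hxy
  simpa [mulVec_mulVec, hQ, smul_mulVec, ha] using this

theorem Matrix.PosDef.transpose_mul_mul_same_of_transpose_mul_self_eq_smul_one {E : Matrix n n ℝ}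
    (hE : E.PosDef) (ha : a ≠ 0) (hQ : Qᵀ * Q = a • 1) : (Qᵀ * E * Q).PosDef := by
  simpa [conjTranspose_eq_transpose_of_trivial] using
    hE.conjTranspose_mul_mul_same (mulVec_injective_of_transpose_mul_self_eq_smul_one ha hQ)

/-- Gauss–Markov: with `N = (Qᵀ E⁻¹ Q)⁻¹`, the matrix `K = a⁻¹ Q - E⁻¹ Q N` satisfies
`Kᵀ E K = a⁻² Qᵀ E Q - N`. -/
theorem Matrix.PosDef.posSemidef_sub_inv_transpose_mul_inv_mul [DecidableEq n] {E : Matrix n n ℝ}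
    (hE : E.PosDef) (ha : a ≠ 0) (hQ : Qᵀ * Q = a • 1) :
    ((a⁻¹ * a⁻¹) • (Qᵀ * E * Q) - (Qᵀ * E⁻¹ * Q)⁻¹).PosSemidef := by
  set N := (Qᵀ * E⁻¹ * Q)⁻¹
  have hC := hE.inv.transpose_mul_mul_same_of_transpose_mul_self_eq_smul_one ha hQ
  have hCN : Qᵀ * E⁻¹ * Q * N = 1 := mul_nonsing_inv _ ((isUnit_iff_isUnit_det _).mp hC.isUnit)
  have hEE : E * E⁻¹ = 1 := mul_nonsing_inv _ ((isUnit_iff_isUnit_det _).mp hE.isUnit)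
  have hEE' : E⁻¹ * E = 1 := nonsing_inv_mul _ ((isUnit_iff_isUnit_det _).mp hE.isUnit)
  have hNt : Nᵀ = N := by simpa [conjTranspose_eq_transpose_of_trivial] using hC.inv.isHermitian.eq
  have hEt : (E⁻¹)ᵀ = E⁻¹ := by
    simpa [conjTranspose_eq_transpose_of_trivial] using hE.inv.isHermitian.eq
  set K := a⁻¹ • Q - E⁻¹ * Q * N
  have hEK : E * K = a⁻¹ • (E * Q) - Q * N := by
    simp only [K, Matrix.mul_sub, Matrix.mul_smul, ← Matrix.mul_assoc, hEE, Matrix.one_mul]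
  have hKt : Kᵀ = a⁻¹ • Qᵀ - N * Qᵀ * E⁻¹ := by
    simp only [K, transpose_sub, transpose_smul, transpose_mul, hNt, hEt, Matrix.mul_assoc]
  have hK : Kᵀ * E * K = (a⁻¹ * a⁻¹) • (Qᵀ * E * Q) - N := by
    rw [Matrix.mul_assoc, hEK, hKt]
    simp only [Matrix.sub_mul, Matrix.mul_sub, Matrix.smul_mul, Matrix.mul_smul, Matrix.mul_assoc]
    rw [← Matrix.mul_assoc Qᵀ Q, hQ, ← Matrix.mul_assoc E⁻¹ E, hEE', Matrix.one_mul, hQ,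
      ← Matrix.mul_assoc E⁻¹ Q N, ← Matrix.mul_assoc Qᵀ (E⁻¹ * Q) N, ← Matrix.mul_assoc Qᵀ E⁻¹ Q,
      hCN]
    simp only [Matrix.smul_mul, Matrix.mul_smul, Matrix.one_mul, Matrix.mul_one, smul_smul,
      inv_mul_cancel₀ ha, one_smul, smul_sub]
    abel
  simpa [hK, conjTranspose_eq_transpose_of_trivial] using hE.posSemidef.conjTranspose_mul_mul_same K

theorem Matrix.exists_mul_transpose_eq_one_and_eq_mul_transpose {R : Matrix n m ℝ} (ha : a ≠ 0)
    (hR : Q * (Qᵀ * R) = a • R) (hRR : Rᵀ * R = a • 1) :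
    ∃ U : Matrix m m ℝ, U * Uᵀ = 1 ∧ R = Q * Uᵀ := by
  refine ⟨a⁻¹ • (Rᵀ * Q), ?_, ?_⟩
  · rw [transpose_smul, transpose_mul, transpose_transpose, Matrix.smul_mul, Matrix.mul_smul,
      Matrix.mul_assoc, hR, Matrix.mul_smul, hRR, smul_smul, smul_smul, smul_smul,
      inv_mul_cancel_right₀ ha, inv_mul_cancel₀ ha, one_smul]
  · rw [transpose_smul, transpose_mul, transpose_transpose, Matrix.mul_smul, hR, smul_smul,
      inv_mul_cancel₀ ha, one_smul]

theorem Matrix.inv_transpose_mul_diagonal_const_mul [DecidableEq n] (hQ : Qᵀ * Q = a • 1)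
    {c : ℝ} (hca : c * a ≠ 0) : (Qᵀ * diagonal (fun _ : n => c) * Q)⁻¹ = (c * a)⁻¹ • 1 := by
  rw [← smul_one_eq_diagonal, Matrix.mul_smul, Matrix.mul_one, Matrix.smul_mul, hQ, smul_smul]
  refine inv_eq_left_inv ?_
  rw [Matrix.smul_mul, Matrix.one_mul, smul_smul, inv_mul_cancel₀ hca, one_smul]

end ScaledIsometry

theorem Matrix.sum_transpose_submatrix_addRight_mul_diagonal_mul {n m R : Type*} [Fintype n]
    [AddGroup n] [DecidableEq n] [CommSemiring R] (Q : Matrix n m R) (w : n → R) :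
    ∑ t, (Q.submatrix (· + t) id)ᵀ * diagonal w * Q.submatrix (· + t) id =
      (∑ u, w u) • (Qᵀ * Q) := by
  ext j k
  simp only [sum_apply, smul_apply, smul_eq_mul, sum_mul, mul_apply, transpose_apply,
    submatrix_apply, id, diagonal_apply, mul_ite, mul_zero, sum_ite_eq', mem_univ, if_true]
  rw [sum_comm]
  refine sum_congr rfl fun i _ => ?_
  rw [mul_sum]
  exact Fintype.sum_equiv (Equiv.addLeft i) _ _ fun t => by simp only [Equiv.coe_addLeft]; ring

section CompletelySymmetric

variable {n m : Type*} [Fintype n] [Fintype m] [DecidableEq n] {Q : Matrix n m ℝ} {a : ℝ}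

theorem Matrix.mul_transpose_mul_of_sum_col_eq_zero {k : Type*} {c : ℝ}
    (hQQ : Q * Qᵀ = a • (1 - c • of fun _ _ => 1)) {R : Matrix n k ℝ}
    (hR : ∀ j, ∑ i, R i j = 0) : Q * (Qᵀ * R) = a • R := by
  have hJR : (of fun _ _ => (1 : ℝ) : Matrix n n ℝ) * R = 0 := by
    ext i j; simpa [mul_apply] using hR j
  rw [← Matrix.mul_assoc, hQQ, Matrix.smul_mul, Matrix.sub_mul, Matrix.smul_mul, hJR,
    Matrix.one_mul, smul_zero, sub_zero]

/-- From `S² = a S` for `S = QᵀQ`, the matrix `a - S = a⁻¹ (S - a)²` is positive semidefinite,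
and its trace vanishes because `tr S = tr (QQᵀ) = a (|n| - 1) = a |m|`. -/
theorem Matrix.transpose_mul_self_eq_smul_one [DecidableEq m] (ha : 0 < a)
    (hQQ : Q * Qᵀ = a • (1 - (Fintype.card n : ℝ)⁻¹ • of fun _ _ => 1))
    (hQc : ∀ j, ∑ i, Q i j = 0) (hmn : Fintype.card m + 1 = Fintype.card n) :
    Qᵀ * Q = a • 1 := by
  set S := Qᵀ * Q
  have hSS : S * S = a • S := by
    rw [Matrix.mul_assoc, mul_transpose_mul_of_sum_col_eq_zero hQQ hQc, Matrix.mul_smul]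
  have hSt : Sᵀ = S := by simp [S]
  have hsq : a • 1 - S = a⁻¹ • ((S - a • 1)ᵀ * (S - a • 1)) := by
    rw [transpose_sub, hSt, transpose_smul, transpose_one]
    simp only [Matrix.sub_mul, Matrix.mul_sub, hSS, Matrix.smul_mul, Matrix.mul_smul,
      Matrix.one_mul, Matrix.mul_one, smul_sub, smul_smul, inv_mul_cancel₀ ha.ne', one_smul]
    rw [show a⁻¹ * (a * a) = a by field_simp]
    abel
  have hpsd : (a • 1 - S).PosSemidef := by
    rw [hsq]
    have := (PosSemidef.one.conjTranspose_mul_mul_same (S - a • 1)).smul (inv_nonneg.mpr ha.le)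
    simpa [conjTranspose_eq_transpose_of_trivial] using this
  have htr : (a • 1 - S).trace = 0 := by
    have hcard : (0 : ℝ) < Fintype.card n := by rw [← hmn]; positivity
    rw [trace_sub, trace_smul, trace_one, trace_mul_comm, hQQ, trace_smul, trace_sub,
      trace_one, trace_smul]
    simp only [smul_eq_mul, trace, diag_apply, of_apply, sum_const, card_univ, nsmul_eq_mul,
      mul_one, inv_mul_cancel₀ hcard.ne']
    rw [← hmn]; push_cast; ring
  exact (sub_eq_zero.mp (hpsd.trace_eq_zero_iff.mp htr)).symm

theorem Matrix.exists_sum_conj_transpose_mul_diagonal_mul_eq_smul_one [AddGroup n] [DecidableEq m]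
    {c : ℝ} (ha : a ≠ 0) (hQQ : Q * Qᵀ = a • (1 - c • of fun _ _ => 1))
    (hQc : ∀ j, ∑ i, Q i j = 0) (hQtQ : Qᵀ * Q = a • 1) (w : n → ℝ) :
    ∃ U : n → Matrix m m ℝ, (∀ t, U t * (U t)ᵀ = 1) ∧
      ∑ t, U t * (Qᵀ * diagonal w * Q) * (U t)ᵀ = (a * ∑ u, w u) • 1 := by
  choose U hU hQU using fun t : n =>
    exists_mul_transpose_eq_one_and_eq_mul_transpose ha
      (mul_transpose_mul_of_sum_col_eq_zero hQQ (R := Q.submatrix (· + t) id)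
        fun j => (Equiv.sum_comp (Equiv.addRight t) fun i => Q i j).trans (hQc j))
      (by rw [transpose_submatrix, ← submatrix_mul Qᵀ Q id (· + t) id (Equiv.addRight t).bijective,
        hQtQ, submatrix_id_id])
  refine ⟨U, hU, ?_⟩
  have hconj : ∀ t, U t * (Qᵀ * diagonal w * Q) * (U t)ᵀ =
      (Q.submatrix (· + t) id)ᵀ * diagonal w * Q.submatrix (· + t) id := fun t => by
    simp only [hQU t, transpose_mul, transpose_transpose, Matrix.mul_assoc]
  rw [sum_congr rfl fun t _ => hconj t, sum_transpose_submatrix_addRight_mul_diagonal_mul, hQtQ,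
    smul_smul, mul_comm]

end CompletelySymmetric

theorem stmt11_general {v : ℕ} (hv : 2 ≤ v) (a : ℝ) (ha : 0 < a)
    (Q : Matrix (Fin v) (Fin (v - 1)) ℝ)
    (hQc : ∀ j, ∑ i, Q i j = 0)
    (hQQ : Q * Qᵀ = a • ((1 : Matrix (Fin v) (Fin v) ℝ)
        - (v : ℝ)⁻¹ • Matrix.of (fun _ _ => (1 : ℝ))))
    (Φ : Matrix (Fin (v - 1)) (Fin (v - 1)) ℝ → ℝ)
    (hconc : ∀ α : ℝ, 0 ≤ α → α ≤ 1 →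
      ∀ A B : Matrix (Fin (v - 1)) (Fin (v - 1)) ℝ, A.PosSemidef → B.PosSemidef →
        α * Φ A + (1 - α) * Φ B ≤ Φ (α • A + (1 - α) • B))
    (hiso : ∀ A B : Matrix (Fin (v - 1)) (Fin (v - 1)) ℝ,
      A.PosSemidef → B.PosSemidef → (B - A).PosSemidef → Φ A ≤ Φ B)
    (hinv : ∀ U : Matrix (Fin (v - 1)) (Fin (v - 1)) ℝ, U * Uᵀ = 1 →
      ∀ N : Matrix (Fin (v - 1)) (Fin (v - 1)) ℝ, Φ (U * N * Uᵀ) = Φ N)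
    (w : Fin v → ℝ) (hw : ∀ u, 0 < w u) (hw1 : ∑ u, w u = 1) :
    Φ ((Qᵀ * diagonal (fun u => (w u)⁻¹) * Q)⁻¹) ≤
      Φ ((Qᵀ * diagonal (fun _ : Fin v => ((v : ℝ)⁻¹)⁻¹) * Q)⁻¹) := by
  have : NeZero v := ⟨by omega⟩
  have hQQ' : Q * Qᵀ = a • (1 - (Fintype.card (Fin v) : ℝ)⁻¹ • of fun _ _ => 1) := by
    simpa using hQQ
  have hQtQ : Qᵀ * Q = a • 1 := transpose_mul_self_eq_smul_one ha hQQ' hQc (by simp; omega)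
  have hΦ : ConcaveOn ℝ {A | A.PosSemidef} Φ :=
    ⟨convex_setOf_posSemidef, fun A hA B hB α β hα hβ hαβ => by
      obtain rfl : β = 1 - α := by linarith
      exact hconc α hα (by linarith) A B hA hB⟩
  have hE : (diagonal w).PosDef := posDef_diagonal_iff.mpr hw
  have hD : diagonal (fun u => (w u)⁻¹) = (diagonal w)⁻¹ :=
    (inv_eq_left_inv (by simp [diagonal_mul_diagonal, fun u => (hw u).ne'])).symm
  obtain ⟨U, hU, hsum⟩ :=
    exists_sum_conj_transpose_mul_diagonal_mul_eq_smul_one ha.ne' hQQ' hQc hQtQ w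
  set B := (a⁻¹ * a⁻¹) • (Qᵀ * diagonal w * Q)
  have hB : B.PosSemidef :=
    (hE.transpose_mul_mul_same_of_transpose_mul_self_eq_smul_one ha.ne' hQtQ).posSemidef.smul
      (by positivity)
  calc Φ ((Qᵀ * diagonal (fun u => (w u)⁻¹) * Q)⁻¹)
      ≤ Φ B := by
        rw [hD]
        exact hiso _ _ (hE.inv.transpose_mul_mul_same_of_transpose_mul_self_eq_smul_one ha.ne'
          hQtQ).inv.posSemidef hB (hE.posSemidef_sub_inv_transpose_mul_inv_mul ha.ne' hQtQ)
    _ ≤ Φ ((Fintype.card (Fin v) : ℝ)⁻¹ • ∑ t, U t * B * (U t)ᵀ) :=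
        hΦ.le_apply_smul_sum_conj hinv hB U hU
    _ = _ := by
        rw [inv_transpose_mul_diagonal_const_mul hQtQ (by positivity)]
        simp only [B, Matrix.mul_smul, Matrix.smul_mul, ← smul_sum, hsum, hw1, smul_smul,
          Fintype.card_fin]
        congr 1
        field_simp

/-- For a completely symmetric system of contrasts
(QQᵀ = a(I − J/v), a > 0, Q of full column rank v−1) and any concave,
Loewner-isotone, orthogonally invariant criterion Φ, the uniform treatment
proportions design w̄ = 1_v/v is Φ-optimal in the marginal model. -/
theorem stmt11 {v : ℕ} (hv : 2 ≤ v) (a : ℝ) (ha : 0 < a)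
    (Q : Matrix (Fin v) (Fin (v - 1)) ℝ)
    (hQc : ∀ j, ∑ i, Q i j = 0)
    (hQrank : Q.rank = v - 1)
    (hQQ : Q * Qᵀ = a • ((1 : Matrix (Fin v) (Fin v) ℝ)
        - (v : ℝ)⁻¹ • Matrix.of (fun _ _ => (1 : ℝ))))
    (Φ : Matrix (Fin (v - 1)) (Fin (v - 1)) ℝ → ℝ)
    (hconc : ∀ α : ℝ, 0 ≤ α → α ≤ 1 →
      ∀ A B : Matrix (Fin (v - 1)) (Fin (v - 1)) ℝ, A.PosSemidef → B.PosSemidef →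
        α * Φ A + (1 - α) * Φ B ≤ Φ (α • A + (1 - α) • B))
    (hiso : ∀ A B : Matrix (Fin (v - 1)) (Fin (v - 1)) ℝ,
      A.PosSemidef → B.PosSemidef → (B - A).PosSemidef → Φ A ≤ Φ B)
    (hinv : ∀ U : Matrix (Fin (v - 1)) (Fin (v - 1)) ℝ, U * Uᵀ = 1 →
      ∀ N : Matrix (Fin (v - 1)) (Fin (v - 1)) ℝ, Φ (U * N * Uᵀ) = Φ N)
    (w : Fin v → ℝ) (hw : ∀ u, 0 < w u) (hw1 : ∑ u, w u = 1) :
    Φ ((Qᵀ * diagonal (fun u => (w u)⁻¹) * Q)⁻¹) ≤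
      Φ ((Qᵀ * diagonal (fun _ : Fin v => ((v : ℝ)⁻¹)⁻¹) * Q)⁻¹) :=
  stmt11_general hv a ha Q hQc hQQ Φ hconc hiso hinv w hw hw1
end
end

section
/- Let v, g be integers with 0 < g < v/2. For w ∈ ℝ^v with all w_u > 0 and Σ_u w_u = 1, define Ψ(w) = (v−g) Σ_{i=1}^{g} 1/w_i + g Σ_{j=g+1}^{v} 1/w_j (this equals Σ_{1≤i≤g<j≤v}(1/w_i + 1/w_j) = trace(Qᵀ diag(w)⁻¹ Q) for the contrast matrix Q of comparison of treatments with controls, i.e., it is the A-criterion value of w). Let γ = (√(g(v−g)) − g) / (v − 2g) and let w* ∈ ℝ^v be given by w*_i = γ/g for 1 ≤ i ≤ g and w*_j = (1−γ)/(v−g) for g+1 ≤ j ≤ v. Then Ψ(w) ≥ Ψ(w*) = g·v·(v−g) + 2(g(v−g))^{3/2} for every such w, with equality if and only if w = w*. Hence w* is the A-optimal (Φ_{−1}-optimal) treatment proportions design for comparison of v−g treatments with g controls. -/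
/-! Write `a_u` for the square root of the coefficient of `1 / w_u` in `Psi` and `S = ∑ a_u`.
When `∑ w_u = 1`, `∑ a_u² / w_u - S² = ∑ (a_u - S w_u)² / w_u ≥ 0`, so `Psi w ≥ S²` with equality
exactly when `w = a / S`; and `a / S` is the design `w*`. -/

open Matrix Finset

noncomputable section

/-- The A-criterion value Ψ(w) = (v−g) Σ_{i≤g} 1/w_i + g Σ_{j>g} 1/w_j
= trace(Qᵀ diag(w)⁻¹ Q) for comparison of v−g treatments with g controls. -/
def Psi (v g : ℕ) (w : Fin v → ℝ) : ℝ :=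
  ((v : ℝ) - g) * ∑ i ∈ Finset.univ.filter (fun i : Fin v => (i : ℕ) < g), (w i)⁻¹
    + (g : ℝ) * ∑ i ∈ Finset.univ.filter (fun i : Fin v => g ≤ (i : ℕ)), (w i)⁻¹

section SumSqDiv

variable {ι : Type*} [Fintype ι] (a w : ι → ℝ)

theorem sum_sq_div_sub_sq_sum (hw : ∀ u, w u ≠ 0) (hw1 : ∑ u, w u = 1) :
    ∑ u, a u ^ 2 / w u - (∑ u, a u) ^ 2 = ∑ u, (a u - (∑ u, a u) * w u) ^ 2 / w u := by
  set S := ∑ u, a u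
  have expand : ∀ u, (a u - S * w u) ^ 2 / w u = a u ^ 2 / w u - 2 * S * a u + S ^ 2 * w u :=
    fun u => by field_simp [hw u]; ring
  simp only [expand, sum_add_distrib, sum_sub_distrib, ← mul_sum, hw1]
  ring

variable {a w}

theorem sq_sum_le_sum_sq_div (hw : ∀ u, 0 < w u) (hw1 : ∑ u, w u = 1) :
    (∑ u, a u) ^ 2 ≤ ∑ u, a u ^ 2 / w u := by
  have := sum_sq_div_sub_sq_sum a w (fun u => (hw u).ne') hw1
  have : 0 ≤ ∑ u, (a u - (∑ u, a u) * w u) ^ 2 / w u :=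
    sum_nonneg fun u _ => div_nonneg (sq_nonneg _) (hw u).le
  linarith

theorem sum_sq_div_eq_sq_sum_iff (hw : ∀ u, 0 < w u) (hw1 : ∑ u, w u = 1) :
    ∑ u, a u ^ 2 / w u = (∑ u, a u) ^ 2 ↔ ∀ u, a u = (∑ u, a u) * w u := by
  rw [← sub_eq_zero, sum_sq_div_sub_sq_sum a w (fun u => (hw u).ne') hw1,
    sum_eq_zero_iff_of_nonneg fun u _ => div_nonneg (sq_nonneg _) (hw u).le]
  simp [(hw _).ne', sub_eq_zero]

theorem sum_eq_one_of_eq_sum_mul (h : ∀ u, a u = (∑ u, a u) * w u) (hS : ∑ u, a u ≠ 0) :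
    ∑ u, w u = 1 := by
  have hsum : ∑ u, a u = (∑ u, a u) * ∑ u, w u := by
    rw [mul_sum]; exact sum_congr rfl fun u _ => h u
  exact (mul_eq_left₀ hS).1 hsum.symm

end SumSqDiv

theorem sqrt_mul_sub_div_sub_eq {x y : ℝ} (hx : 0 ≤ x) (hxy : x < y) :
    (√(x * y) - x) / (y - x) = √x / (√x + √y) := by
  have hy : 0 ≤ y := hx.trans hxy.le
  have hlt : √x < √y := Real.sqrt_lt_sqrt hx hxy
  rw [Real.sqrt_mul hx, div_eq_div_iff (by linarith) (by linarith [Real.sqrt_nonneg x])]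
  linear_combination √y * Real.sq_sqrt hx + √x * Real.sq_sqrt hy

section Design

variable (v g : ℕ)

def psiRoot (u : Fin v) : ℝ := if (u : ℕ) < g then √((v : ℝ) - g) else √(g : ℝ)

variable {v g}

theorem Psi_eq_sum_psiRoot_sq_div (hgv : g ≤ v) (w : Fin v → ℝ) :
    Psi v g w = ∑ u, psiRoot v g u ^ 2 / w u := by
  have hvg : (0 : ℝ) ≤ (v : ℝ) - g := sub_nonneg.2 (Nat.cast_le.2 hgv)
  simp only [psiRoot, apply_ite (· ^ 2), Real.sq_sqrt hvg, Real.sq_sqrt (Nat.cast_nonneg g),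
    div_eq_mul_inv, ite_mul]
  rw [sum_ite, Psi, mul_sum, mul_sum]
  simp only [not_lt]

theorem sum_psiRoot (hgv : g ≤ v) :
    ∑ u, psiRoot v g u = √(g : ℝ) * √((v : ℝ) - g) * (√(g : ℝ) + √((v : ℝ) - g)) := by
  have hcard : #{i : Fin v | (i : ℕ) < g} = g := by
    rw [Fin.card_filter_val_lt, min_eq_right hgv]
  have hcard' : #{i : Fin v | ¬ (i : ℕ) < g} = v - g := by
    rw [filter_not, card_sdiff_of_subset (filter_subset _ _), hcard, card_univ, Fintype.card_fin]
  have hvg : (0 : ℝ) ≤ (v : ℝ) - g := sub_nonneg.2 (Nat.cast_le.2 hgv)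
  simp only [psiRoot, sum_ite, sum_const, hcard, hcard', nsmul_eq_mul, Nat.cast_sub hgv]
  nth_rewrite 1 [← Real.sq_sqrt (Nat.cast_nonneg g)]
  nth_rewrite 2 [← Real.sq_sqrt hvg]
  ring

theorem psiRoot_pos (hg : 0 < g) (hgv : g < v) (u : Fin v) : 0 < psiRoot v g u := by
  have hvg : (0 : ℝ) < (v : ℝ) - g := sub_pos.2 (Nat.cast_lt.2 hgv)
  unfold psiRoot
  split_ifs <;> positivity

theorem sq_sum_psiRoot (hgv : g ≤ v) :
    (∑ u, psiRoot v g u) ^ 2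
      = (g : ℝ) * v * ((v : ℝ) - g) + 2 * ((g : ℝ) * ((v : ℝ) - g)) ^ ((3 : ℝ) / 2) := by
  have hvg : (0 : ℝ) ≤ (v : ℝ) - g := sub_nonneg.2 (Nat.cast_le.2 hgv)
  have h32 : ((g : ℝ) * ((v : ℝ) - g)) ^ ((3 : ℝ) / 2)
      = (g : ℝ) * ((v : ℝ) - g) * (√(g : ℝ) * √((v : ℝ) - g)) := by
    rw [show (3 : ℝ) / 2 = 1 + 1 / 2 by norm_num, Real.rpow_add' (by positivity) (by norm_num),
      Real.rpow_one, ← Real.sqrt_eq_rpow, Real.sqrt_mul (Nat.cast_nonneg g)]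
  rw [sum_psiRoot hgv, h32]
  set s := √(g : ℝ)
  set r := √((v : ℝ) - g)
  linear_combination ((s + r) ^ 2 * r ^ 2 + g * ((v : ℝ) - g)) * Real.sq_sqrt (Nat.cast_nonneg g)
    + ((s + r) ^ 2 * g + g * ((v : ℝ) - g)) * Real.sq_sqrt hvg

theorem psiRoot_eq_sum_mul (hg : 0 < g) (hgv : 2 * g < v)
    {γ : ℝ} (hγ : γ = (√((g : ℝ) * ((v : ℝ) - g)) - g) / ((v : ℝ) - 2 * g))
    {wstar : Fin v → ℝ}
    (hws : ∀ i, wstar i = if (i : ℕ) < g then γ / g else (1 - γ) / ((v : ℝ) - g)) (u : Fin v) :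
    psiRoot v g u = (∑ u, psiRoot v g u) * wstar u := by
  have hgR : (0 : ℝ) < g := by exact_mod_cast hg
  have hgvR : (2 * g : ℝ) < v := by exact_mod_cast hgv
  have hγ' : γ = √(g : ℝ) / (√(g : ℝ) + √((v : ℝ) - g)) := by
    rw [hγ, show (v : ℝ) - 2 * g = ((v : ℝ) - g) - g by ring]
    exact sqrt_mul_sub_div_sub_eq hgR.le (by linarith)
  have hs := Real.sq_sqrt hgR.le
  have hr := Real.sq_sqrt (show (0 : ℝ) ≤ (v : ℝ) - g by linarith)
  have hs0 : 0 < √(g : ℝ) := Real.sqrt_pos.2 hgR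
  have hr0 : 0 < √((v : ℝ) - g) := Real.sqrt_pos.2 (by linarith)
  rw [hws, sum_psiRoot (by omega), hγ', psiRoot]
  set s := √(g : ℝ)
  set r := √((v : ℝ) - g)
  split_ifs
  · field_simp
    exact hs.symm
  · field_simp
    rw [add_sub_cancel_left, ← hr]
    field_simp

end Design

/-- The design w* with w*_i = γ/g on the g controls and
w*_j = (1−γ)/(v−g) on the v−g treatments, γ = (√(g(v−g)) − g)/(v−2g), is the
unique minimizer of the A-criterion Ψ, and
Ψ(w*) = g·v·(v−g) + 2(g(v−g))^{3/2}. -/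
theorem stmt12 {v g : ℕ} (hg : 0 < g) (hgv : 2 * g < v)
    (γ : ℝ) (hγ : γ = (Real.sqrt ((g : ℝ) * ((v : ℝ) - g)) - g) / ((v : ℝ) - 2 * g))
    (wstar : Fin v → ℝ)
    (hws : ∀ i, wstar i = if (i : ℕ) < g then γ / g else (1 - γ) / ((v : ℝ) - g))
    (w : Fin v → ℝ) (hw : ∀ u, 0 < w u) (hw1 : ∑ u, w u = 1) :
    Psi v g wstar = (g : ℝ) * v * ((v : ℝ) - g)
        + 2 * ((g : ℝ) * ((v : ℝ) - g)) ^ ((3 : ℝ) / 2) ∧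
    Psi v g wstar ≤ Psi v g w ∧
    (Psi v g w = Psi v g wstar ↔ w = wstar) := by
  set S := ∑ u, psiRoot v g u
  have hstar : ∀ u, psiRoot v g u = S * wstar u := psiRoot_eq_sum_mul hg hgv hγ hws
  have hS : 0 < S := sum_pos (fun u _ => psiRoot_pos hg (by omega) u) ⟨⟨0, by omega⟩, mem_univ _⟩
  have hstar_pos : ∀ u, 0 < wstar u := fun u =>
    pos_of_mul_pos_right (hstar u ▸ psiRoot_pos hg (by omega) u) hS.le
  have hstar_sum : ∑ u, wstar u = 1 := sum_eq_one_of_eq_sum_mul hstar hS.ne'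
  have hPsi_star : Psi v g wstar = S ^ 2 := by
    rw [Psi_eq_sum_psiRoot_sq_div (by omega)]
    exact (sum_sq_div_eq_sq_sum_iff hstar_pos hstar_sum).2 hstar
  refine ⟨hPsi_star.trans (sq_sum_psiRoot (by omega)), ?_, ?_⟩
  · rw [hPsi_star, Psi_eq_sum_psiRoot_sq_div (by omega)]
    exact sq_sum_le_sum_sq_div hw hw1
  · rw [hPsi_star, Psi_eq_sum_psiRoot_sq_div (by omega), sum_sq_div_eq_sq_sum_iff hw hw1, funext_iff]
    exact forall_congr' fun u => by rw [hstar u, mul_right_inj' hS.ne', eq_comm]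

end
end

section
/- Let v, g be integers with 0 < g < v/2 and let Q = (−I_g ⊗ 1_{v−g}, 1_g ⊗ I_{v−g})ᵀ be the v × g(v−g) contrast matrix for comparison of the last v−g treatments with the first g controls. Then for every w ∈ ℝ^v with all w_u > 0 and Σ_u w_u = 1, the largest eigenvalue of the symmetric positive semidefinite matrix Qᵀ diag(w)⁻¹ Q satisfies λ_max(Qᵀ diag(w)⁻¹ Q) ≥ 4g(v−g), and equality holds for the design w* given by w*_i = 1/(2g) for 1 ≤ i ≤ g and w*_j = 1/(2(v−g)) for g+1 ≤ j ≤ v. Hence w*, which allocates total weight γ = 1/2 to the controls, is E-optimal (Φ_{−∞}-optimal) for comparison of v−g treatments with g controls. -/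
open Matrix Finset

noncomputable section

/-- The contrast matrix Q = (−I_g ⊗ 1_{v−g}, 1_g ⊗ I_{v−g})ᵀ for comparison of
the last v−g treatments with the first g controls: the column indexed by the
pair (i,j) is the contrast τ_{g+j} − τ_i. -/
def Qcc (v g : ℕ) : Matrix (Fin v) (Fin g × Fin (v - g)) ℝ :=
  Matrix.of fun u p =>
    (if (u : ℕ) = (p.1 : ℕ) then (-1 : ℝ) else 0) +
    (if (u : ℕ) = g + (p.2 : ℕ) then (1 : ℝ) else 0)

/-!
The largest eigenvalue of `Qᵀ diag(d) Q` is the maximum of the Rayleigh quotient, and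
`xᵀ Qᵀ diag(d) Q x = ∑ᵢ dᵢ (∑ⱼ xᵢⱼ)² + ∑ⱼ d_{g+j} (∑ᵢ xᵢⱼ)²`.
At `x = 1` with `d = w⁻¹`, Cauchy–Schwarz in Sedrakyan's form together with `∑ w = 1` bounds the
quadratic form below by `(∑ᵤ |(Q 1)ᵤ|)² = (2g(v-g))²`, while `‖1‖² = g(v-g)`.
For `w*` the weights `d` are `2g` on the controls and `2(v-g)` on the treatments, and
Cauchy–Schwarz on every row and column sum of `x` bounds the quotient by `4g(v-g)`.
-/

open scoped MatrixOrder in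
/-- Via the continuous functional calculus, `A ≤ c • 1` in the Loewner order iff the spectrum of
`A` lies below `c`. -/
theorem Matrix.IsHermitian.iSup_eigenvalues_le_iff {n : Type*} [Fintype n] [DecidableEq n]
    [Nonempty n] {A : Matrix n n ℝ} (hA : A.IsHermitian) {c : ℝ} :
    ⨆ i, hA.eigenvalues i ≤ c ↔ ∀ x : n → ℝ, x ⬝ᵥ A *ᵥ x ≤ c * (x ⬝ᵥ x) := by
  have h := le_algebraMap_iff_spectrum_le (r := c) hA.isSelfAdjoint
  rw [hA.spectrum_real_eq_range_eigenvalues, Set.forall_mem_range, Matrix.le_iff,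
    posSemidef_iff_dotProduct_mulVec,
    and_iff_right ((IsSelfAdjoint.algebraMap _ (.all c)).sub hA.isSelfAdjoint).isHermitian] at h
  rw [ciSup_le_iff (Set.finite_range _).bddAbove, ← h]
  simp [Algebra.algebraMap_eq_smul_one, sub_mulVec, dotProduct_sub, smul_mulVec]

theorem Matrix.IsHermitian.dotProduct_mulVec_le_iSup_eigenvalues_mul {n : Type*} [Fintype n]
    [DecidableEq n] [Nonempty n] {A : Matrix n n ℝ} (hA : A.IsHermitian) (x : n → ℝ) :
    x ⬝ᵥ A *ᵥ x ≤ (⨆ i, hA.eigenvalues i) * (x ⬝ᵥ x) :=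
  hA.iSup_eigenvalues_le_iff.mp le_rfl x

theorem Matrix.dotProduct_transpose_mul_diagonal_mul_mulVec {m n R : Type*} [Fintype m]
    [Fintype n] [DecidableEq m] [CommRing R] (Q : Matrix m n R) (d : m → R) (x : n → R) :
    x ⬝ᵥ (Qᵀ * diagonal d * Q) *ᵥ x = ∑ u, d u * (Q *ᵥ x) u ^ 2 := by
  rw [← mulVec_mulVec, ← mulVec_mulVec, dotProduct_mulVec, vecMul_transpose]
  simp only [dotProduct, mulVec_diagonal]
  exact sum_congr rfl fun u _ => by ring

theorem Fin.sum_univ_eq_sum_castLE_add {M : Type*} [AddCommMonoid M] {v g : ℕ} (h : g ≤ v)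
    (f : Fin v → M) :
    ∑ u, f u = ∑ i : Fin g, f (Fin.castLE h i) + ∑ j : Fin (v - g), f ⟨g + j, by omega⟩ := by
  rw [← (finCongr (Nat.add_sub_cancel' h)).sum_comp, Fin.sum_univ_add]
  rfl

theorem Qcc_castLE_apply {v g : ℕ} (h : g ≤ v) (i : Fin g) (p : Fin g × Fin (v - g)) :
    Qcc v g (Fin.castLE h i) p = if p.1 = i then -1 else 0 := by
  have : (i : ℕ) ≠ g + p.2 := by omega
  simp [Qcc, this, Fin.ext_iff, eq_comm]

theorem Qcc_mk_add_apply {v g : ℕ} (j : Fin (v - g)) (p : Fin g × Fin (v - g)) :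
    Qcc v g ⟨g + j, by omega⟩ p = if p.2 = j then 1 else 0 := by
  have : g + (j : ℕ) ≠ p.1 := by omega
  simp [Qcc, this, Fin.ext_iff, eq_comm]

theorem Qcc_mulVec_castLE {v g : ℕ} (h : g ≤ v) (x : Fin g × Fin (v - g) → ℝ) (i : Fin g) :
    (Qcc v g *ᵥ x) (Fin.castLE h i) = -∑ j, x (i, j) := by
  simp [mulVec, dotProduct, Qcc_castLE_apply, Fintype.sum_prod_type_right, ite_mul]

theorem Qcc_mulVec_mk_add {v g : ℕ} (x : Fin g × Fin (v - g) → ℝ) (j : Fin (v - g)) :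
    (Qcc v g *ᵥ x) ⟨g + j, by omega⟩ = ∑ i, x (i, j) := by
  simp [mulVec, dotProduct, Qcc_mk_add_apply, Fintype.sum_prod_type, ite_mul]

theorem dotProduct_transpose_Qcc_mul_diagonal_mul_mulVec {v g : ℕ} (h : g ≤ v) (d : Fin v → ℝ)
    (x : Fin g × Fin (v - g) → ℝ) :
    x ⬝ᵥ ((Qcc v g)ᵀ * diagonal d * Qcc v g) *ᵥ x =
      ∑ i, d (Fin.castLE h i) * (∑ j, x (i, j)) ^ 2 +
        ∑ j : Fin (v - g), d ⟨g + j, by omega⟩ * (∑ i, x (i, j)) ^ 2 := by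
  simp only [dotProduct_transpose_mul_diagonal_mul_mulVec, Fin.sum_univ_eq_sum_castLE_add h,
    Qcc_mulVec_castLE, Qcc_mulVec_mk_add, neg_sq]

theorem sum_abs_Qcc_mulVec_one {v g : ℕ} (h : g ≤ v) :
    ∑ u, |(Qcc v g *ᵥ 1) u| = 2 * g * ((v : ℝ) - g) := by
  simp only [Fin.sum_univ_eq_sum_castLE_add h, Qcc_mulVec_castLE, Qcc_mulVec_mk_add,
    Pi.one_apply, sum_const, card_univ, Fintype.card_fin, nsmul_eq_mul, mul_one, abs_neg,
    Nat.abs_cast]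
  rw [Nat.cast_sub h]
  ring

theorem four_mul_le_iSup_eigenvalues_Qcc {v g : ℕ} (hg : 0 < g) (hgv : g < v) (w : Fin v → ℝ)
    (hw : ∀ u, 0 < w u) (hw1 : ∑ u, w u = 1)
    (hA : ((Qcc v g)ᵀ * diagonal (fun u => (w u)⁻¹) * Qcc v g).IsHermitian) :
    4 * (g : ℝ) * ((v : ℝ) - g) ≤ ⨆ p, hA.eigenvalues p := by
  have : Nonempty (Fin g × Fin (v - g)) := ⟨(⟨0, hg⟩, ⟨0, by omega⟩)⟩
  have hgm : 0 < (g : ℝ) * ((v : ℝ) - g) :=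
    mul_pos (by exact_mod_cast hg) (sub_pos.mpr (by exact_mod_cast hgv))
  have hnorm : (1 : Fin g × Fin (v - g) → ℝ) ⬝ᵥ 1 = g * ((v : ℝ) - g) := by
    simp [Nat.cast_sub hgv.le]
  have hquad : (1 : Fin g × Fin (v - g) → ℝ) ⬝ᵥ
      ((Qcc v g)ᵀ * diagonal (fun u => (w u)⁻¹) * Qcc v g) *ᵥ 1 =
      ∑ u, |(Qcc v g *ᵥ 1) u| ^ 2 / w u := by
    simp only [dotProduct_transpose_mul_diagonal_mul_mulVec, sq_abs, inv_mul_eq_div]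
  have hsed := sq_sum_div_le_sum_sq_div univ (fun u => |(Qcc v g *ᵥ 1) u|) fun u _ => hw u
  rw [sum_abs_Qcc_mulVec_one hgv.le, hw1, div_one, ← hquad] at hsed
  have hray := hA.dotProduct_mulVec_le_iSup_eigenvalues_mul 1
  rw [hnorm] at hray
  refine le_of_mul_le_mul_right ?_ hgm
  calc 4 * (g : ℝ) * ((v : ℝ) - g) * (g * ((v : ℝ) - g)) = (2 * g * ((v : ℝ) - g)) ^ 2 := by ring
    _ ≤ _ := hsed
    _ ≤ _ := hray

theorem sum_sq_sum_le_card_mul_sum_sum_sq {ι κ : Type*} [Fintype ι] [Fintype κ]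
    (y : ι → κ → ℝ) :
    ∑ i, (∑ j, y i j) ^ 2 ≤ Fintype.card κ * ∑ i, ∑ j, y i j ^ 2 := by
  rw [mul_sum]
  exact sum_le_sum fun i _ => sq_sum_le_card_mul_sum_sq

theorem iSup_eigenvalues_Qcc_le {v g : ℕ} (hg : 0 < g) (hgv : g < v) {d : Fin v → ℝ} {a b : ℝ}
    (ha : 0 ≤ a) (hb : 0 ≤ b) (hda : ∀ i : Fin g, d (Fin.castLE hgv.le i) = a)
    (hdb : ∀ j : Fin (v - g), d ⟨g + j, by omega⟩ = b)
    (hA : ((Qcc v g)ᵀ * diagonal d * Qcc v g).IsHermitian) :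
    ⨆ p, hA.eigenvalues p ≤ a * ((v : ℝ) - g) + b * g := by
  have : Nonempty (Fin g × Fin (v - g)) := ⟨(⟨0, hg⟩, ⟨0, by omega⟩)⟩
  refine hA.iSup_eigenvalues_le_iff.mpr fun x => ?_
  have hx : x ⬝ᵥ x = ∑ i, ∑ j, x (i, j) ^ 2 := by
    simp only [dotProduct, Fintype.sum_prod_type, sq]
  have hcontrols : ∑ i, (∑ j, x (i, j)) ^ 2 ≤ ((v : ℝ) - g) * (x ⬝ᵥ x) :=
    (sum_sq_sum_le_card_mul_sum_sum_sq fun i j => x (i, j)).trans_eq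
      (by rw [Fintype.card_fin, Nat.cast_sub hgv.le, hx])
  have htreatments : ∑ j, (∑ i, x (i, j)) ^ 2 ≤ g * (x ⬝ᵥ x) :=
    (sum_sq_sum_le_card_mul_sum_sum_sq fun j i => x (i, j)).trans_eq
      (by rw [Fintype.card_fin, hx, sum_comm])
  rw [dotProduct_transpose_Qcc_mul_diagonal_mul_mulVec hgv.le, add_mul]
  simp only [hda, hdb, ← mul_sum]
  calc _ ≤ a * (((v : ℝ) - g) * (x ⬝ᵥ x)) + b * (g * (x ⬝ᵥ x)) := by
        gcongr
    _ = _ := by ring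

def balancedDesign (v g : ℕ) : Fin v → ℝ :=
  fun u => if (u : ℕ) < g then (2 * (g : ℝ))⁻¹ else (2 * ((v : ℝ) - g))⁻¹

theorem balancedDesign_castLE {v g : ℕ} (h : g ≤ v) (i : Fin g) :
    balancedDesign v g (Fin.castLE h i) = (2 * (g : ℝ))⁻¹ := by
  simp [balancedDesign]

theorem balancedDesign_mk_add {v g : ℕ} (j : Fin (v - g)) :
    balancedDesign v g ⟨g + j, by omega⟩ = (2 * ((v : ℝ) - g))⁻¹ := by
  simp [balancedDesign]

theorem balancedDesign_pos {v g : ℕ} (hgv : g < v) (u : Fin v) : 0 < balancedDesign v g u := by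
  have : (g : ℝ) < v := by exact_mod_cast hgv
  unfold balancedDesign
  split_ifs with hu
  · have : (0 : ℝ) < g := by exact_mod_cast (Nat.zero_le _).trans_lt hu
    positivity
  · have : (0 : ℝ) < v - g := by linarith
    positivity

theorem sum_balancedDesign {v g : ℕ} (hg : 0 < g) (hgv : g < v) :
    ∑ u, balancedDesign v g u = 1 := by
  have : (0 : ℝ) < v - g := by simpa using (show (g : ℝ) < v by exact_mod_cast hgv)
  have : (0 : ℝ) < g := by exact_mod_cast hg
  simp only [Fin.sum_univ_eq_sum_castLE_add hgv.le, balancedDesign_castLE, balancedDesign_mk_add,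
    sum_const, card_univ, Fintype.card_fin, nsmul_eq_mul, Nat.cast_sub hgv.le]
  field_simp
  ring

/-- For every treatment proportions design w,
λ_max(Qᵀ diag(w)⁻¹ Q) ≥ 4g(v−g), with equality for the design w* allocating
weight 1/(2g) to each control and 1/(2(v−g)) to each treatment; hence w*
(total control weight γ = 1/2) is E-optimal for comparing v−g treatments with
g controls. -/
theorem stmt13 {v g : ℕ} (hg : 0 < g) (hgv : 2 * g < v)
    (w : Fin v → ℝ) (hw : ∀ u, 0 < w u) (hw1 : ∑ u, w u = 1)
    (wstar : Fin v → ℝ)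
    (hws : ∀ i, wstar i = if (i : ℕ) < g then (2 * (g : ℝ))⁻¹
      else (2 * ((v : ℝ) - g))⁻¹) :
    (∀ hA : ((Qcc v g)ᵀ * diagonal (fun u => (w u)⁻¹) * Qcc v g).IsHermitian,
      4 * (g : ℝ) * ((v : ℝ) - g) ≤ ⨆ p, hA.eigenvalues p) ∧
    (∀ hA : ((Qcc v g)ᵀ * diagonal (fun u => (wstar u)⁻¹) * Qcc v g).IsHermitian,
      (⨆ p, hA.eigenvalues p) = 4 * (g : ℝ) * ((v : ℝ) - g)) := by
  have hgv' : g < v := by omega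
  obtain rfl : wstar = balancedDesign v g := funext hws
  refine ⟨four_mul_le_iSup_eigenvalues_Qcc hg hgv' w hw hw1, fun hA => le_antisymm ?_
    (four_mul_le_iSup_eigenvalues_Qcc hg hgv' _ (balancedDesign_pos hgv')
      (sum_balancedDesign hg hgv') hA)⟩
  have : (g : ℝ) < v := by exact_mod_cast hgv'
  calc ⨆ p, hA.eigenvalues p ≤ 2 * g * ((v : ℝ) - g) + 2 * ((v : ℝ) - g) * g :=
        iSup_eigenvalues_Qcc_le hg hgv' (by positivity) (by linarith)
          (fun i => by rw [balancedDesign_castLE, inv_inv])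
          (fun j => by rw [balancedDesign_mk_add, inv_inv]) hA
    _ = 4 * g * ((v : ℝ) - g) := by ring

end
end

section
/- Let v, g be integers with 0 < g < v/2, let γ = (√(g(v−g)) − g)/(v − 2g), and let w* ∈ ℝ^v be given by w*_i = γ/g for 1 ≤ i ≤ g and w*_j = (1−γ)/(v−g) for g+1 ≤ j ≤ v. Then for every w ∈ ℝ^v with all w_u > 0 and Σ_u w_u = 1, max over pairs (i,j) with 1 ≤ i ≤ g and g+1 ≤ j ≤ v of (1/w_i + 1/w_j) is at least v + 2√(g(v−g)), and equality holds at w = w*. Hence w* is MV-optimal (it minimizes the maximum variance of the contrasts of interest) for comparison of v−g treatments with g controls. -/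
/-!
Let `A` be the total weight of the `g` controls, so the treatments carry `1 - A`. The lightest
control weighs at most `A / g` and the lightest treatment at most `(1 - A) / (v - g)`, so the pair
formed by them has `1/w_i + 1/w_j ≥ g / A + (v - g) / (1 - A)`. By Sedrakyan's form of
Cauchy–Schwarz this is at least `(√g + √(v - g))² = v + 2√(g(v - g))`. The design `w*` puts
`A = γ = √g / (√g + √(v - g))`, the equality case of Cauchy–Schwarz, and is constant within each
group, so it attains the bound on every pair.
-/

open Finset

namespace Finset

variable {ι : Type*}

theorem exists_card_mul_le_sum (s : Finset ι) (hs : s.Nonempty) (w : ι → ℝ) :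
    ∃ i ∈ s, #s * w i ≤ ∑ u ∈ s, w u := by
  obtain ⟨i, hi, hmin⟩ := s.exists_min_image w hs
  exact ⟨i, hi, by simpa [nsmul_eq_mul] using s.card_nsmul_le_sum w (w i) hmin⟩

theorem exists_card_div_sum_le_inv {s : Finset ι} (hs : s.Nonempty) {w : ι → ℝ}
    (hw : ∀ u ∈ s, 0 < w u) : ∃ i ∈ s, #s / ∑ u ∈ s, w u ≤ (w i)⁻¹ := by
  obtain ⟨i, hi, hle⟩ := s.exists_card_mul_le_sum hs w
  refine ⟨i, hi, ?_⟩
  rwa [div_le_iff₀ (sum_pos hw hs), inv_mul_eq_div, le_div_iff₀ (hw i hi)]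

end Finset

theorem sq_add_div_add_le_div_add_div (a b : ℝ) {x y : ℝ} (hx : 0 < x) (hy : 0 < y) :
    (a + b) ^ 2 / (x + y) ≤ a ^ 2 / x + b ^ 2 / y := by
  simpa [Fin.sum_univ_two] using
    sq_sum_div_le_sum_sq_div univ ![a, b] (g := ![x, y]) (by simp [Fin.forall_fin_two, hx, hy])

theorem Real.sqrt_add_sqrt_sq {a b : ℝ} (ha : 0 ≤ a) (hb : 0 ≤ b) :
    (√a + √b) ^ 2 = a + b + 2 * √(a * b) := by
  rw [add_sq, Real.sq_sqrt ha, Real.sq_sqrt hb, Real.sqrt_mul ha]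
  ring

theorem exists_sqrt_card_add_sqrt_card_sq_le_inv_add_inv {ι : Type*} [Fintype ι] [DecidableEq ι]
    {w : ι → ℝ} (hw : ∀ u, 0 < w u) (hw1 : ∑ u, w u = 1) {s : Finset ι} (hs : s.Nonempty)
    (hsc : sᶜ.Nonempty) :
    ∃ i ∈ s, ∃ j ∈ sᶜ, (√(#s : ℝ) + √(#sᶜ : ℝ)) ^ 2 ≤ (w i)⁻¹ + (w j)⁻¹ := by
  obtain ⟨i, hi, hwi⟩ := exists_card_div_sum_le_inv hs fun u _ ↦ hw u
  obtain ⟨j, hj, hwj⟩ := exists_card_div_sum_le_inv hsc fun u _ ↦ hw u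
  refine ⟨i, hi, j, hj, ?_⟩
  calc (√(#s : ℝ) + √(#sᶜ : ℝ)) ^ 2
      = (√(#s : ℝ) + √(#sᶜ : ℝ)) ^ 2 / (∑ u ∈ s, w u + ∑ u ∈ sᶜ, w u) := by
        rw [sum_add_sum_compl, hw1, div_one]
    _ ≤ √(#s : ℝ) ^ 2 / ∑ u ∈ s, w u + √(#sᶜ : ℝ) ^ 2 / ∑ u ∈ sᶜ, w u :=
        sq_add_div_add_le_div_add_div _ _ (sum_pos (fun u _ ↦ hw u) hs)
          (sum_pos (fun u _ ↦ hw u) hsc)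
    _ = #s / ∑ u ∈ s, w u + #sᶜ / ∑ u ∈ sᶜ, w u := by
        rw [Real.sq_sqrt (Nat.cast_nonneg _), Real.sq_sqrt (Nat.cast_nonneg _)]
    _ ≤ (w i)⁻¹ + (w j)⁻¹ := add_le_add hwi hwj

theorem sqrt_mul_sub_div_sub_eq_s14 {a b : ℝ} (ha : 0 ≤ a) (hb : 0 ≤ b) (hab : a ≠ b) :
    (√(a * b) - a) / (b - a) = √a / (√a + √b) := by
  obtain ⟨p, hp, rfl⟩ : ∃ p, 0 ≤ p ∧ p ^ 2 = a := ⟨√a, Real.sqrt_nonneg a, Real.sq_sqrt ha⟩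
  obtain ⟨q, hq, rfl⟩ : ∃ q, 0 ≤ q ∧ q ^ 2 = b := ⟨√b, Real.sqrt_nonneg b, Real.sq_sqrt hb⟩
  rw [← mul_pow, Real.sqrt_sq (mul_nonneg hp hq), Real.sqrt_sq hp, Real.sqrt_sq hq]
  have hpq : p ≠ q := fun h ↦ hab (by rw [h])
  have hadd : p + q ≠ 0 := fun h ↦ hpq (by linarith)
  rw [div_eq_div_iff (sub_ne_zero.2 (Ne.symm hab)) hadd]
  ring

theorem div_add_div_one_sub_eq_sqrt_add_sqrt_sq {a b γ : ℝ} (ha : 0 < a) (hb : 0 < b)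
    (hab : a ≠ b) (hγ : γ = (√(a * b) - a) / (b - a)) :
    a / γ + b / (1 - γ) = (√a + √b) ^ 2 := by
  subst hγ
  rw [sqrt_mul_sub_div_sub_eq_s14 ha.le hb.le hab]
  obtain ⟨p, hp, rfl⟩ : ∃ p, 0 < p ∧ p ^ 2 = a := ⟨√a, Real.sqrt_pos.2 ha, Real.sq_sqrt ha.le⟩
  obtain ⟨q, hq, rfl⟩ : ∃ q, 0 < q ∧ q ^ 2 = b := ⟨√b, Real.sqrt_pos.2 hb, Real.sq_sqrt hb.le⟩
  have hpq : 0 < p + q := add_pos hp hq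
  rw [Real.sqrt_sq hp.le, Real.sqrt_sq hq.le, one_sub_div hpq.ne', add_sub_cancel_left]
  field_simp

/-- For every treatment proportions design w, the maximum over
pairs (i,j), i a control and j a treatment, of 1/w_i + 1/w_j (the variance of
the estimator of τ_j − τ_i) is at least v + 2√(g(v−g)), with equality at the
design w* with w*_i = γ/g on controls and w*_j = (1−γ)/(v−g) on treatments,
γ = (√(g(v−g)) − g)/(v−2g); hence w* is MV-optimal. -/
theorem stmt14 {v g : ℕ} (hg : 0 < g) (hgv : 2 * g < v)
    (γ : ℝ) (hγ : γ = (Real.sqrt ((g : ℝ) * ((v : ℝ) - g)) - g) / ((v : ℝ) - 2 * g))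
    (wstar : Fin v → ℝ)
    (hws : ∀ i, wstar i = if (i : ℕ) < g then γ / g else (1 - γ) / ((v : ℝ) - g))
    (w : Fin v → ℝ) (hw : ∀ u, 0 < w u) (hw1 : ∑ u, w u = 1) :
    (∃ i j : Fin v, (i : ℕ) < g ∧ g ≤ (j : ℕ) ∧
      (v : ℝ) + 2 * Real.sqrt ((g : ℝ) * ((v : ℝ) - g)) ≤ (w i)⁻¹ + (w j)⁻¹) ∧
    (∀ i j : Fin v, (i : ℕ) < g → g ≤ (j : ℕ) →
      (wstar i)⁻¹ + (wstar j)⁻¹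
        = (v : ℝ) + 2 * Real.sqrt ((g : ℝ) * ((v : ℝ) - g))) := by
  have hg0 : (0 : ℝ) < g := by exact_mod_cast hg
  have hgv' : (g : ℝ) < v - g := by
    have : 2 * (g : ℝ) < v := by exact_mod_cast hgv
    linarith
  have hbound : (√(g : ℝ) + √((v : ℝ) - g)) ^ 2 = v + 2 * √((g : ℝ) * (v - g)) := by
    rw [Real.sqrt_add_sqrt_sq hg0.le (by linarith)]
    ring
  constructor
  · set s : Finset (Fin v) := {u | (u : ℕ) < g}
    have hs : #s = g := by simp only [s, Fin.card_filter_val_lt]; omega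
    have hsc : #sᶜ = v - g := by rw [card_compl, hs, Fintype.card_fin]
    obtain ⟨i, hi, j, hj, hle⟩ := exists_sqrt_card_add_sqrt_card_sq_le_inv_add_inv hw hw1
      (s := s) (card_pos.1 (by omega)) (card_pos.1 (by omega))
    refine ⟨i, j, by simpa [s] using hi, by simpa [s] using hj, ?_⟩
    rwa [hs, hsc, Nat.cast_sub (by omega), hbound] at hle
  · intro i j hi hj
    rw [hws, hws, if_pos hi, if_neg (by omega), inv_div, inv_div, ← hbound]
    exact div_add_div_one_sub_eq_sqrt_add_sqrt_sq hg0 (by linarith) hgv'.ne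
      (by rw [hγ, sub_sub, ← two_mul])
end

section
/- Let v, g be integers with v > 2 and 0 < g < v/2, and let p ∈ (−∞, 0] be real. Define F : [0, 1/2] → ℝ by F(γ) = (v−g−1) γ^{1−p} − (g−1)(1−γ)^{1−p} + 2γ − 1 (real powers). Then F is continuous and strictly increasing on [0, 1/2], F(0) = −g < 0 and F(1/2) = (v−2g)(1/2)^{1−p} > 0; consequently there exists a unique γ_p ∈ (0, 1/2) with F(γ_p) = 0. -/
open Set

theorem StrictMonoOn.existsUnique_mem_Ioo_eq {α δ : Type*} [ConditionallyCompleteLinearOrder α]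
    [TopologicalSpace α] [OrderTopology α] [DenselyOrdered α] [LinearOrder δ]
    [TopologicalSpace δ] [OrderClosedTopology δ] {a b : α} {f : α → δ} {y : δ}
    (hab : a ≤ b) (hf : ContinuousOn f (Icc a b)) (hmono : StrictMonoOn f (Icc a b))
    (hy : y ∈ Ioo (f a) (f b)) : ∃! x, x ∈ Ioo a b ∧ f x = y := by
  obtain ⟨x, hx, rfl⟩ := intermediate_value_Ioo hab hf hy
  exact ⟨x, ⟨hx, rfl⟩, fun x' ⟨hx', hfx'⟩ =>
    hmono.injOn (Ioo_subset_Icc_self hx') (Ioo_subset_Icc_self hx) hfx'⟩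

/-- With `a = v - g - 1`, `b = g - 1` and `q = 1 - p` this is the function `F` whose root
is `γ_p`. -/
noncomputable def optimalityDefect (a b q γ : ℝ) : ℝ :=
  a * γ ^ q - b * (1 - γ) ^ q + 2 * γ - 1

namespace optimalityDefect

variable {a b q : ℝ}

theorem continuous (hq : 0 ≤ q) : Continuous (optimalityDefect a b q) := by
  unfold optimalityDefect
  have hpow : Continuous fun γ : ℝ => γ ^ q := Real.continuous_rpow_const hq
  fun_prop

theorem strictMonoOn (ha : 0 ≤ a) (hb : 0 ≤ b) (hq : 0 ≤ q) :
    StrictMonoOn (optimalityDefect a b q) (Icc 0 1) := by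
  intro x hx y hy hxy
  have hxq : x ^ q ≤ y ^ q := Real.rpow_le_rpow hx.1 hxy.le hq
  have hyq : (1 - y) ^ q ≤ (1 - x) ^ q := Real.rpow_le_rpow (by linarith [hy.2]) (by linarith) hq
  have haq := mul_le_mul_of_nonneg_left hxq ha
  have hbq := mul_le_mul_of_nonneg_left hyq hb
  unfold optimalityDefect
  linarith

theorem apply_zero (hq : q ≠ 0) : optimalityDefect a b q 0 = -b - 1 := by
  simp [optimalityDefect, Real.zero_rpow hq]

theorem apply_half : optimalityDefect a b q (1 / 2) = (a - b) * (1 / 2 : ℝ) ^ q := by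
  norm_num [optimalityDefect]
  ring

end optimalityDefect

theorem stmt15_general {v g : ℕ} (hg : 0 < g) (hgv : 2 * g < v)
    (p : ℝ) (hp : p ≤ 0)
    (F : ℝ → ℝ)
    (hF : ∀ γ : ℝ, F γ = ((v : ℝ) - g - 1) * γ ^ (1 - p)
        - ((g : ℝ) - 1) * (1 - γ) ^ (1 - p) + 2 * γ - 1) :
    ContinuousOn F (Set.Icc 0 (1 / 2)) ∧
    StrictMonoOn F (Set.Icc 0 (1 / 2)) ∧
    F 0 = -(g : ℝ) ∧ F 0 < 0 ∧
    F (1 / 2) = ((v : ℝ) - 2 * g) * (1 / 2 : ℝ) ^ (1 - p) ∧ 0 < F (1 / 2) ∧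
    (∃! γ : ℝ, γ ∈ Set.Ioo (0 : ℝ) (1 / 2) ∧ F γ = 0) := by
  have hg1 : (1 : ℝ) ≤ g := by exact_mod_cast hg
  have hgv' : 2 * (g : ℝ) + 1 ≤ v := by exact_mod_cast hgv
  have hq : (0 : ℝ) ≤ 1 - p := by linarith
  have hFeq : F = optimalityDefect (v - g - 1) (g - 1) (1 - p) := funext hF
  have hcont : ContinuousOn F (Icc 0 (1 / 2)) :=
    hFeq ▸ (optimalityDefect.continuous hq).continuousOn
  have hmono : StrictMonoOn F (Icc 0 (1 / 2)) :=
    hFeq ▸ (optimalityDefect.strictMonoOn (by linarith) (by linarith) hq).mono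
      (Icc_subset_Icc_right (by norm_num))
  have hF0 : F 0 = -(g : ℝ) := by
    rw [hFeq, optimalityDefect.apply_zero (by linarith)]
    ring
  have hFhalf : F (1 / 2) = ((v : ℝ) - 2 * g) * (1 / 2 : ℝ) ^ (1 - p) := by
    rw [hFeq, optimalityDefect.apply_half]
    ring
  have hF0_neg : F 0 < 0 := by linarith
  have hFhalf_pos : 0 < F (1 / 2) := hFhalf ▸ mul_pos (by linarith) (by positivity)
  exact ⟨hcont, hmono, hF0, hF0_neg, hFhalf, hFhalf_pos,
    hmono.existsUnique_mem_Ioo_eq (by norm_num) hcont ⟨hF0_neg, hFhalf_pos⟩⟩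

/-- For v > 2, 0 < g < v/2 and p ∈ (−∞,0], the function
F(γ) = (v−g−1)γ^{1−p} − (g−1)(1−γ)^{1−p} + 2γ − 1 is continuous and strictly
increasing on [0,1/2], F(0) = −g < 0, F(1/2) = (v−2g)(1/2)^{1−p} > 0, and F
has a unique root γ_p in (0,1/2). -/
theorem stmt15 {v g : ℕ} (hv : 2 < v) (hg : 0 < g) (hgv : 2 * g < v)
    (p : ℝ) (hp : p ≤ 0)
    (F : ℝ → ℝ)
    (hF : ∀ γ : ℝ, F γ = ((v : ℝ) - g - 1) * γ ^ (1 - p)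
        - ((g : ℝ) - 1) * (1 - γ) ^ (1 - p) + 2 * γ - 1) :
    ContinuousOn F (Set.Icc 0 (1 / 2)) ∧
    StrictMonoOn F (Set.Icc 0 (1 / 2)) ∧
    F 0 = -(g : ℝ) ∧ F 0 < 0 ∧
    F (1 / 2) = ((v : ℝ) - 2 * g) * (1 / 2 : ℝ) ^ (1 - p) ∧ 0 < F (1 / 2) ∧
    (∃! γ : ℝ, γ ∈ Set.Ioo (0 : ℝ) (1 / 2) ∧ F γ = 0) :=
  stmt15_general hg hgv p hp F hF
end

section
/- Let v ≥ 2, n ≥ 1 and d ≥ 1 be integers, h : {1,…,n} → ℝ^d, and let k be the affine dimension of the set {h(1), …, h(n)}, i.e., the dimension of the linear span of {h(t) − h(1) : t = 1,…,n}. Fix w ∈ ℝ^v with all w_u > 0 and Σ_u w_u = 1, and let P ⊆ ℝ^{v×n} be the polytope of all ξ = (ξ(u,t)) satisfying: ξ(u,t) ≥ 0 for all (u,t); Σ_{t=1}^n ξ(u,t) = w_u for all u ∈ {1,…,v}; (1/w_1) Σ_{t=1}^n ξ(1,t) h(t) = (1/w_u) Σ_{t=1}^n ξ(u,t) h(t)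 for all u ∈ {2,…,v}; and Σ_{u=1}^v ξ(u,t) = 1/n for all t ∈ {1,…,n}. Then every extreme point ξ of P has at most v + (v−1)k + n − 1 nonzero entries. -/
/-!
At an extreme point `x` of a polytope `{y | 0 ≤ y ∧ L y = b}` the columns of `L` indexed by the
support of `x` are linearly independent: a kernel vector of `L` supported there could be added to
and subtracted from `x` in small multiples, exhibiting `x` as a midpoint. So the support has at
most `dim W` elements when `L` takes values in `W`.

The design polytope is of this form with only `(v - 1) + (v - 1) k + n` independent constraints:
the row sum of the first treatment follows from the column sums and the other row sums, and once
the row sums are fixed, the balance conditions only involve the differences `h t - h t₀`, which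
span a space of dimension `k`.
-/

open Finset Filter Topology

noncomputable section

section ExtremePoints

variable {ι W : Type*} [Fintype ι] [AddCommGroup W] [Module ℝ W]
  (L : (ι → ℝ) →ₗ[ℝ] W) {b : W} {x : ι → ℝ}

theorem eq_zero_of_mem_extremePoints_of_support_subset
    (hx : x ∈ Set.extremePoints ℝ {y | 0 ≤ y ∧ L y = b}) {η : ι → ℝ} (hLη : L η = 0)
    (hη : ∀ i, x i = 0 → η i = 0) : η = 0 := by
  obtain ⟨⟨hx0, hLx⟩, hext⟩ := hx
  have hsmall : ∀ᶠ ε in 𝓝[>] (0 : ℝ), ∀ i, |ε * η i| ≤ x i := by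
    refine eventually_all.2 fun i => ?_
    rcases (hx0 i).eq_or_lt with hxi | hxi
    · simp [hη i hxi.symm, ← hxi]
    · have hcont : Tendsto (fun ε : ℝ => |ε * η i|) (𝓝 0) (𝓝 0) := by
        simpa using ((continuous_id.mul continuous_const).abs).tendsto' (0 : ℝ) _ (by simp)
      exact nhdsWithin_le_nhds (hcont.eventually (ge_mem_nhds hxi))
  obtain ⟨ε, hε, hεpos⟩ := (hsmall.and self_mem_nhdsWithin).exists
  have hmem : ∀ s : ℝ, (∀ i, |s * η i| ≤ x i) → x + s • η ∈ {y | 0 ≤ y ∧ L y = b} :=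
    fun s hs => ⟨fun i => by simpa [neg_le_iff_add_nonneg'] using neg_le_of_abs_le (hs i),
      by simp [hLx, hLη]⟩
  have hseg : x ∈ openSegment ℝ (x + ε • η) (x + (-ε) • η) :=
    ⟨1 / 2, 1 / 2, by norm_num, by norm_num, by norm_num, by ext; simp; ring⟩
  simpa [hεpos.ne'] using hext (hmem ε hε) (hmem (-ε) (by simpa using hε)) hseg

theorem linearIndependent_single_of_mem_extremePoints [DecidableEq ι]
    (hx : x ∈ Set.extremePoints ℝ {y | 0 ≤ y ∧ L y = b}) :
    LinearIndependent ℝ fun i : {i // x i ≠ 0} => L (Pi.single (i : ι) 1) := by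
  refine ((Pi.linearIndependent_single_one ι ℝ).comp _ Subtype.val_injective).map ?_
  rw [Submodule.disjoint_def]
  intro η hspan hker
  obtain ⟨c, rfl⟩ := (Submodule.mem_span_range_iff_exists_fun ℝ).1 hspan
  refine eq_zero_of_mem_extremePoints_of_support_subset L hx hker fun j hj => ?_
  simp only [Finset.sum_apply, Pi.smul_apply, Function.comp_apply, smul_eq_mul]
  refine Finset.sum_eq_zero fun i _ => ?_
  rw [Pi.single_eq_of_ne fun hji : j = i => i.2 (hji ▸ hj), mul_zero]

theorem card_support_le_finrank_of_mem_extremePoints [FiniteDimensional ℝ W]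
    (hx : x ∈ Set.extremePoints ℝ {y | 0 ≤ y ∧ L y = b}) :
    #{i | x i ≠ 0} ≤ Module.finrank ℝ W := by
  classical
  rw [← Fintype.card_subtype]
  exact (linearIndependent_single_of_mem_extremePoints L hx).fintype_card_le_finrank

end ExtremePoints

theorem sum_smul_eq_sum_smul_sub_add {ι M : Type*} [Fintype ι] [AddCommGroup M] [Module ℝ M]
    (c : ι → ℝ) (f : ι → M) (i₀ : ι) :
    ∑ i, c i • f i = ∑ i, c i • (f i - f i₀) + (∑ i, c i) • f i₀ := by
  simp [smul_sub, sum_sub_distrib, sum_smul]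

theorem sum_row_eq_of_sum_col_eq {ι κ M : Type*} [Fintype ι] [DecidableEq ι] [Fintype κ]
    [AddCommGroup M] {x y : ι → κ → M} (hcol : ∀ j, ∑ i, y i j = ∑ i, x i j) {i₀ : ι}
    (hrow : ∀ i ≠ i₀, ∑ j, y i j = ∑ j, x i j) : ∑ j, y i₀ j = ∑ j, x i₀ j := by
  have htotal : ∑ i, ∑ j, y i j = ∑ i, ∑ j, x i j := by
    rw [sum_comm, sum_congr rfl fun j _ => hcol j, sum_comm]
  rw [← add_sum_erase _ _ (mem_univ i₀), ← add_sum_erase _ _ (mem_univ i₀),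
    sum_congr rfl fun i hi => hrow i (ne_of_mem_erase hi)] at htotal
  exact add_right_cancel htotal

section BalancedDesigns

variable {v n d : ℕ} (h : Fin n → Fin d → ℝ) (w : Fin v → ℝ) (z : Fin v) (t₀ : Fin n)

def balancedDesigns : Set (Fin v → Fin n → ℝ) :=
  {ξ | (∀ u t, 0 ≤ ξ u t) ∧ (∀ u, ∑ t, ξ u t = w u) ∧
    (∀ u, (w z)⁻¹ • ∑ t, ξ z t • h t = (w u)⁻¹ • ∑ t, ξ u t • h t) ∧
    (∀ t, ∑ u, ξ u t = (n : ℝ)⁻¹)}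

abbrev centeredSpan : Submodule ℝ (Fin d → ℝ) :=
  Submodule.span ℝ (Set.range fun t => h t - h t₀)

def centered (t : Fin n) : centeredSpan h t₀ :=
  ⟨h t - h t₀, Submodule.subset_span ⟨t, rfl⟩⟩

def designConstraints : (Fin v → Fin n → ℝ) →ₗ[ℝ]
    ({u // u ≠ z} → ℝ) × ({u // u ≠ z} → centeredSpan h t₀) × (Fin n → ℝ) where
  toFun ξ := (fun u => ∑ t, ξ u t,
    fun u => (w z)⁻¹ • ∑ t, ξ z t • centered h t₀ t - (w u)⁻¹ • ∑ t, ξ u t • centered h t₀ t,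
    fun t => ∑ u, ξ u t)
  map_add' ξ η := by
    ext <;> simp [sum_add_distrib, add_smul, add_sub_add_comm]
  map_smul' c ξ := by
    ext <;> simp [mul_sum, smul_sum, smul_smul, mul_sub, mul_assoc, mul_left_comm]

variable {h w z t₀} in
theorem designConstraints_fiber_subset {ξ : Fin v → Fin n → ℝ} (hξ : ξ ∈ balancedDesigns h w z) :
    {y | 0 ≤ y ∧ designConstraints h w z t₀ y = designConstraints h w z t₀ ξ} ⊆
      balancedDesigns h w z := by
  rintro y ⟨hy0, hLy⟩
  obtain ⟨-, hrowξ, hbalξ, hcolξ⟩ := hξ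
  simp only [designConstraints, LinearMap.coe_mk, AddHom.coe_mk, Prod.mk.injEq] at hLy
  obtain ⟨hrow', hbal', hcol'⟩ := hLy
  have hcol : ∀ t, ∑ u, y u t = ∑ u, ξ u t := congrFun hcol'
  have hrow : ∀ u, ∑ t, y u t = ∑ t, ξ u t := by
    intro u
    by_cases hu : u = z
    · exact hu ▸ sum_row_eq_of_sum_col_eq hcol fun u hu => congrFun hrow' ⟨u, hu⟩
    · exact congrFun hrow' ⟨u, hu⟩
  refine ⟨fun u t => hy0 u t, fun u => (hrow u).trans (hrowξ u), fun u => ?_,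
    fun t => (hcol t).trans (hcolξ t)⟩
  by_cases hu : u = z
  · rw [hu]
  have hg := congrArg Subtype.val (congrFun hbal' ⟨u, hu⟩)
  simp only [centered, Submodule.coe_sub, Submodule.coe_smul, Submodule.coe_sum] at hg
  have hbal := hbalξ u
  rw [sum_smul_eq_sum_smul_sub_add (ξ z) h t₀, sum_smul_eq_sum_smul_sub_add (ξ u) h t₀] at hbal
  rw [sum_smul_eq_sum_smul_sub_add (y z) h t₀, sum_smul_eq_sum_smul_sub_add (y u) h t₀,
    hrow z, hrow u]
  linear_combination (norm := module) hbal + hg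

end BalancedDesigns

/-- Every extreme point of the polytope P of approximate designs
with prescribed treatment proportions w that are balanced with respect to the
nuisance regressor h and assign weight 1/n to each nuisance condition has at
most v + (v−1)k + n − 1 nonzero entries, where k is the affine dimension of
{h(1),…,h(n)}, i.e. the dimension of the span of {h(t) − h(1)}. -/
theorem stmt18 {v n d : ℕ} (hv : 2 ≤ v) (hn : 0 < n)
    (h : Fin n → Fin d → ℝ)
    (k : ℕ)
    (hk : k = Module.finrank ℝ
      (Submodule.span ℝ (Set.range fun t : Fin n => h t - h ⟨0, hn⟩)))
    (w : Fin v → ℝ)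
    (P : Set (Fin v → Fin n → ℝ))
    (hP : P = {ξ | (∀ u t, 0 ≤ ξ u t) ∧
      (∀ u, ∑ t, ξ u t = w u) ∧
      (∀ u : Fin v, (w ⟨0, by omega⟩)⁻¹ • ∑ t, ξ ⟨0, by omega⟩ t • h t
        = (w u)⁻¹ • ∑ t, ξ u t • h t) ∧
      (∀ t, ∑ u, ξ u t = (n : ℝ)⁻¹)})
    (ξ : Fin v → Fin n → ℝ) (hξ : ξ ∈ Set.extremePoints ℝ P) :
    (Finset.univ.filter fun p : Fin v × Fin n => ξ p.1 p.2 ≠ 0).card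
      ≤ v + (v - 1) * k + n - 1 := by
  set z : Fin v := ⟨0, by omega⟩
  set t₀ : Fin n := ⟨0, hn⟩
  let e := LinearEquiv.curry ℝ ℝ (Fin v) (Fin n)
  let L := designConstraints h w z t₀ ∘ₗ e.toLinearMap
  have hξ' : ξ ∈ Set.extremePoints ℝ (balancedDesigns h w z) := by
    subst hP; exact hξ
  have hx : e.symm ξ ∈ Set.extremePoints ℝ {y | 0 ≤ y ∧ L y = L (e.symm ξ)} := by
    refine inter_extremePoints_subset_extremePoints_of_subset
      (A := e.symm '' balancedDesigns h w z) ?_ ⟨⟨fun p => hξ'.1.1 p.1 p.2, rfl⟩, ?_⟩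
    · rintro y ⟨hy0, hLy⟩
      have hLy' : designConstraints h w z t₀ (e y) = designConstraints h w z t₀ ξ := by
        simpa [L] using hLy
      exact ⟨e y, designConstraints_fiber_subset hξ'.1 ⟨fun u t => hy0 (u, t), hLy'⟩,
        e.symm_apply_apply y⟩
    · rw [← image_extremePoints]
      exact Set.mem_image_of_mem _ hξ'
  have hdim : Module.finrank ℝ
      (({u // u ≠ z} → ℝ) × ({u // u ≠ z} → centeredSpan h t₀) × (Fin n → ℝ)) =
        (v - 1) + (v - 1) * k + n := by
    simp [Module.finrank_prod, Module.finrank_pi_fintype, Fintype.card_subtype_compl, hk,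
      add_assoc]
  calc #{p : Fin v × Fin n | ξ p.1 p.2 ≠ 0} = #{p | e.symm ξ p ≠ 0} := rfl
    _ ≤ _ := card_support_le_finrank_of_mem_extremePoints L hx
    _ = (v - 1) + (v - 1) * k + n := hdim
    _ ≤ v + (v - 1) * k + n - 1 := by omega

end
end
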